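/- arXiv:1209.4956 — 7 statements merged into one kernel-verified Lean document; each statement's English description precedes it below -/
import Mathlib

section
/- Let u be an affine permutation and let a < b be integers with b − a ≤ k. For an affine permutation v, let ℓ(v) denote the number of pairs (i, j) with 1 ≤ i ≤ n, i < j, and v(i) > v(j) (this set of pairs is finite). Then ℓ(u ∘ t_{a,b}) = ℓ(u) + 1 if and only if u(a) < u(b) and for every integer i with a < i < b, either u(i) < u(a) or u(i) > u(b). -/
open Function

/-- The affine transposition `t_{a,b}` of period `n`: it exchanges `a + m*n` and
`b + m*n` for every `m : ℤ` and fixes all other integers. -/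
def affT (n a b : ℤ) : ℤ → ℤ := fun i =>
  if (i - a) % n = 0 then i - a + b
  else if (i - b) % n = 0 then i - b + a
  else i

/-- `u` is an affine permutation of period `n`: a bijection of `ℤ` with
`u (i + n) = u i + n` and `∑_{i=1}^{n} u i = n (n+1) / 2`. -/
def IsAffinePerm (n : ℤ) (u : ℤ → ℤ) : Prop :=
  Function.Bijective u ∧ (∀ i : ℤ, u (i + n) = u i + n) ∧
    ∑ i ∈ Finset.Icc (1 : ℤ) n, u i = n * (n + 1) / 2

/-- The operator `t_{a,b}` is defined at `u`:
`u a ≤ 0 < u b` and for every `a < i < b`, either `u i < u a` or `u i > u b`. -/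
def DefinedAt (u : ℤ → ℤ) (a b : ℤ) : Prop :=
  u a ≤ 0 ∧ 0 < u b ∧ ∀ i : ℤ, a < i → i < b → u i < u a ∨ u b < u i

/-- `u` is 0-grassmannian: the positions of the values `1, 2, …, n` under `u`
appear in increasing order, i.e. `u⁻¹ 1 < u⁻¹ 2 < ⋯ < u⁻¹ n`. -/
def IsGrassmannian (n : ℤ) (u : ℤ → ℤ) : Prop :=
  ∀ i j p q : ℤ, 1 ≤ i → i < j → j ≤ n → u p = i → u q = j → p < q

/-- The composite `u · t_{a,b} · t_{c,d}` is defined. -/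
def Def2 (n : ℤ) (u : ℤ → ℤ) (a b c d : ℤ) : Prop :=
  DefinedAt u a b ∧ DefinedAt (u ∘ affT n a b) c d

/-- The composite `u · t_{a₁,b₁} · t_{a₂,b₂} · t_{a₃,b₃}` is defined. -/
def Def3 (n : ℤ) (u : ℤ → ℤ) (a₁ b₁ a₂ b₂ a₃ b₃ : ℤ) : Prop :=
  DefinedAt u a₁ b₁ ∧ DefinedAt (u ∘ affT n a₁ b₁) a₂ b₂ ∧
    DefinedAt ((u ∘ affT n a₁ b₁) ∘ affT n a₂ b₂) a₃ b₃

/-- The length of an affine permutation: the number of pairs `(i, j)` with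
`1 ≤ i ≤ n`, `i < j` and `v i > v j`. -/
noncomputable def affLen (n : ℤ) (v : ℤ → ℤ) : ℕ :=
  Set.ncard {p : ℤ × ℤ | 1 ≤ p.1 ∧ p.1 ≤ n ∧ p.1 < p.2 ∧ v p.2 < v p.1}

/-!
The inversions of a function `v` with `v (i + n) = v i + n` form a set of pairs that is invariant
under the diagonal shift `(i, j) ↦ (i + n, j + n)`, and `affLen n v` counts its orbits. Write
`t = t_{a,b}` and split the inversions of `u ∘ t` according to whether `t` reverses the pair: on
pairs not reversed by `t`, `(i, j) ↦ (t i, t j)` matches inversions of `u ∘ t` with inversions of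
`u`; on pairs reversed by `t`, `(i, j) ↦ (t j, t i)` matches them with non-inversions of `u`.
Hence `ℓ(u t) - ℓ(u)` is the number of orbits of inversions of `t` that are non-inversions of `u`
minus the number of those that are inversions of `u`. As `b - a < n`, the orbits of inversions of
`t` are represented by `(a, b)` and the pairs `(a, c)`, `(c, b)` with `a < c < b`. Here `(a, b)`
contributes `±1` to the difference, and each couple `(a, c), (c, b)` contributes `0`, or `±2` with
the same sign when `u c` lies strictly between `u a` and `u b`; so the difference is `1` exactly
when `u a < u b` and no such `c` exists.
-/

section DiagOrbits

variable {n : ℤ}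

abbrev DiagQuot (n : ℤ) : Type := (ℤ × ℤ) ⧸ AddSubgroup.zmultiples ((n, n) : ℤ × ℤ)

def diagOrbits (n : ℤ) (S : Set (ℤ × ℤ)) : Set (DiagQuot n) := (↑) '' S

def ShiftInvariant (n : ℤ) (S : Set (ℤ × ℤ)) : Prop :=
  ∀ p ∈ S, ∀ m : ℤ, p + m • (n, n) ∈ S

theorem mk_eq_mk_iff {p q : ℤ × ℤ} : (p : DiagQuot n) = q ↔ ∃ m : ℤ, q = p + m • (n, n) := by
  rw [QuotientAddGroup.eq, AddSubgroup.mem_zmultiples_iff]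
  constructor
  · rintro ⟨m, hm⟩; exact ⟨m, by rw [hm]; abel⟩
  · rintro ⟨m, rfl⟩; exact ⟨m, by abel⟩

@[simp] theorem fst_add_smul (p : ℤ × ℤ) (m : ℤ) : (p + m • (n, n)).1 = p.1 + m * n := rfl

@[simp] theorem snd_add_smul (p : ℤ × ℤ) (m : ℤ) : (p + m • (n, n)).2 = p.2 + m * n := rfl

theorem ShiftInvariant.mem_iff {S : Set (ℤ × ℤ)} (hS : ShiftInvariant n S) (p : ℤ × ℤ) (m : ℤ) :
    p + m • (n, n) ∈ S ↔ p ∈ S :=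
  ⟨fun h => by simpa [add_assoc, ← add_smul, Prod.mk_zero_zero] using hS _ h (-m),
    fun h => hS p h m⟩

theorem ShiftInvariant.compl {S : Set (ℤ × ℤ)} (hS : ShiftInvariant n S) : ShiftInvariant n Sᶜ :=
  fun p hp m => by rwa [Set.mem_compl_iff, hS.mem_iff]

theorem injOn_mk_of_abs_fst_sub_lt {S : Set (ℤ × ℤ)} (hS : ∀ p ∈ S, ∀ q ∈ S, |q.1 - p.1| < n) :
    Set.InjOn ((↑) : ℤ × ℤ → DiagQuot n) S := by
  intro p hp q hq h
  obtain ⟨m, rfl⟩ := mk_eq_mk_iff.1 h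
  have hmn : m * n = 0 :=
    Int.eq_zero_of_abs_lt_dvd (Dvd.intro_left m rfl) (by simpa using hS _ hp _ hq)
  ext <;> simp [hmn]

theorem diagOrbits_window (hn : 0 < n) {S : Set (ℤ × ℤ)} (hS : ShiftInvariant n S) :
    diagOrbits n {p | 1 ≤ p.1 ∧ p.1 ≤ n ∧ p ∈ S} = diagOrbits n S := by
  refine subset_antisymm (Set.image_mono fun p hp => hp.2.2) ?_
  rintro _ ⟨p, hp, rfl⟩
  have h1 := Int.emod_add_mul_ediv (p.1 - 1) n
  have h2 := Int.emod_nonneg (p.1 - 1) hn.ne'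
  have h3 := Int.emod_lt_of_pos (p.1 - 1) hn
  refine ⟨p + (-((p.1 - 1) / n)) • (n, n), ⟨?_, ?_, hS p hp _⟩, ?_⟩
  · simp only [fst_add_smul]; linarith
  · simp only [fst_add_smul]; linarith
  · exact (mk_eq_mk_iff.2 ⟨_, rfl⟩).symm

theorem ncard_window_eq_ncard_diagOrbits (hn : 0 < n) {S : Set (ℤ × ℤ)} (hS : ShiftInvariant n S) :
    {p | 1 ≤ p.1 ∧ p.1 ≤ n ∧ p ∈ S}.ncard = (diagOrbits n S).ncard := by
  rw [← diagOrbits_window hn hS, diagOrbits, Set.InjOn.ncard_image]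
  refine injOn_mk_of_abs_fst_sub_lt fun p hp q hq => ?_
  rw [abs_lt]; constructor <;> linarith [hp.1, hp.2.1, hq.1, hq.2.1]

theorem disjoint_diagOrbits {S T : Set (ℤ × ℤ)} (hS : ShiftInvariant n S) (h : Disjoint S T) :
    Disjoint (diagOrbits n S) (diagOrbits n T) := by
  rw [Set.disjoint_left]
  rintro _ ⟨p, hp, rfl⟩ ⟨q, hq, hpq⟩
  obtain ⟨m, rfl⟩ := mk_eq_mk_iff.1 hpq.symm
  exact Set.disjoint_left.1 h (hS p hp m) hq

theorem ncard_diagOrbits_eq_add {S T : Set (ℤ × ℤ)} (hS : ShiftInvariant n S)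
    (hT : ShiftInvariant n T) (hfin : (diagOrbits n S).Finite) :
    (diagOrbits n S).ncard = (diagOrbits n (S ∩ T)).ncard + (diagOrbits n (S ∩ Tᶜ)).ncard := by
  have hST : ShiftInvariant n (S ∩ T) := fun p hp m => ⟨hS p hp.1 m, hT p hp.2 m⟩
  rw [← Set.ncard_union_eq (disjoint_diagOrbits hST (disjoint_compl_right.mono
      Set.inter_subset_right Set.inter_subset_right))
    (hfin.subset (Set.image_mono Set.inter_subset_left))
    (hfin.subset (Set.image_mono Set.inter_subset_left)), diagOrbits, diagOrbits, diagOrbits,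
    ← Set.image_union, Set.inter_union_compl]

theorem ncard_diagOrbits_preimage {φ : ℤ × ℤ → ℤ × ℤ} (hφ : Function.Involutive φ)
    (hφn : ∀ p : ℤ × ℤ, ∀ m : ℤ, φ (p + m • (n, n)) = φ p + m • (n, n)) (S : Set (ℤ × ℤ)) :
    (diagOrbits n (φ ⁻¹' S)).ncard = (diagOrbits n S).ncard := by
  let Φ : DiagQuot n → DiagQuot n := Quotient.map' φ fun p q hpq => by
    obtain ⟨m, rfl⟩ := mk_eq_mk_iff.1 (Quotient.sound' hpq)
    exact Quotient.exact' (mk_eq_mk_iff.2 ⟨m, hφn p m⟩)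
  have hΦ : Function.Involutive Φ := by
    rintro ⟨p⟩
    exact congrArg _ (hφ p)
  calc (diagOrbits n (φ ⁻¹' S)).ncard = (Φ '' diagOrbits n S).ncard := by
        rw [← hφ.image_eq_preimage_symm, diagOrbits, diagOrbits, Set.image_image, Set.image_image]
        rfl
    _ = (diagOrbits n S).ncard := Set.ncard_image_of_injective _ hΦ.injective

theorem diagOrbits_inter_eq {X R S : Set (ℤ × ℤ)} (hXR : X ⊆ R)
    (hR : ∀ p ∈ R, ∃ m : ℤ, p + m • (n, n) ∈ X) (hS : ShiftInvariant n S) :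
    diagOrbits n (R ∩ S) = diagOrbits n (X ∩ S) := by
  refine subset_antisymm ?_ (Set.image_mono (Set.inter_subset_inter_left S hXR))
  rintro _ ⟨p, ⟨hpR, hpS⟩, rfl⟩
  obtain ⟨m, hm⟩ := hR p hpR
  exact ⟨_, ⟨hm, hS p hpS m⟩, (mk_eq_mk_iff.2 ⟨m, rfl⟩).symm⟩

end DiagOrbits

section Inversions

variable {n : ℤ} {v : ℤ → ℤ}

def invPairs (v : ℤ → ℤ) : Set (ℤ × ℤ) := {p | p.1 < p.2 ∧ v p.2 < v p.1}

theorem periodic_sub_id (hv : ∀ i, v (i + n) = v i + n) : Function.Periodic (fun i => v i - i) n :=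
  fun i => by simp only [hv]; ring

theorem apply_add_mul_of_apply_add (hv : ∀ i, v (i + n) = v i + n) (i m : ℤ) :
    v (i + m * n) = v i + m * n := by
  have h : v (i + m * n) - (i + m * n) = v i - i := (periodic_sub_id hv).int_mul m i
  linarith

theorem shiftInvariant_invPairs (hv : ∀ i, v (i + n) = v i + n) : ShiftInvariant n (invPairs v) :=
  fun p hp m => by
    simp only [invPairs, Set.mem_ofPred_eq, fst_add_smul, snd_add_smul,
      apply_add_mul_of_apply_add hv] at hp ⊢
    omega

theorem exists_abs_sub_id_le (hn : 0 < n) (hv : ∀ i, v (i + n) = v i + n) :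
    ∃ C, ∀ i, |v i - i| ≤ C := by
  obtain ⟨C, hC⟩ := ((Set.finite_Ico 0 n).image fun i => |v i - i|).bddAbove
  refine ⟨C, fun i => ?_⟩
  obtain ⟨j, hj, hij⟩ := (periodic_sub_id hv).exists_mem_Ico₀ hn i
  exact hij ▸ hC ⟨j, hj, rfl⟩

theorem finite_window_invPairs (hn : 0 < n) (hv : ∀ i, v (i + n) = v i + n) :
    {p | 1 ≤ p.1 ∧ p.1 ≤ n ∧ p ∈ invPairs v}.Finite := by
  obtain ⟨C, hC⟩ := exists_abs_sub_id_le hn hv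
  refine (Set.finite_Icc (1, 1) (n, n + 2 * C)).subset fun p ⟨h1, h2, hlt, hinv⟩ => ?_
  have := abs_le.1 (hC p.1)
  have := abs_le.1 (hC p.2)
  exact ⟨⟨h1, by omega⟩, ⟨h2, by omega⟩⟩

theorem affLen_eq_ncard_diagOrbits (hn : 0 < n) (hv : ∀ i, v (i + n) = v i + n) :
    affLen n v = (diagOrbits n (invPairs v)).ncard :=
  ncard_window_eq_ncard_diagOrbits hn (shiftInvariant_invPairs hv)

theorem finite_diagOrbits_invPairs (hn : 0 < n) (hv : ∀ i, v (i + n) = v i + n) :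
    (diagOrbits n (invPairs v)).Finite := by
  rw [← diagOrbits_window hn (shiftInvariant_invPairs hv)]
  exact (finite_window_invPairs hn hv).image _

end Inversions

section Transposition

variable {n a b i : ℤ}

theorem affT_of_dvd_sub_left (h : n ∣ i - a) : affT n a b i = i + (b - a) := by
  rw [affT, if_pos (Int.emod_eq_zero_of_dvd h)]; ring

theorem affT_of_dvd_sub_right (ha : ¬ n ∣ i - a) (hb : n ∣ i - b) : affT n a b i = i - (b - a) := by
  rw [affT, if_neg (mt Int.dvd_of_emod_eq_zero ha), if_pos (Int.emod_eq_zero_of_dvd hb)]; ring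

theorem affT_of_not_dvd (ha : ¬ n ∣ i - a) (hb : ¬ n ∣ i - b) : affT n a b i = i := by
  rw [affT, if_neg (mt Int.dvd_of_emod_eq_zero ha), if_neg (mt Int.dvd_of_emod_eq_zero hb)]

theorem affT_add_mul (i m : ℤ) : affT n a b (i + m * n) = affT n a b i + m * n := by
  simp only [affT, show ∀ c, i + m * n - c = i - c + m * n from fun c => by ring,
    Int.add_mul_emod_self_right]
  split_ifs <;> ring

theorem false_of_dvd_sub_of_dvd_sub (hab : a < b) (hba : b - a < n) (ha : n ∣ i - a)
    (hb : n ∣ i - b) : False :=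
  (Int.le_of_dvd (by omega) (by simpa using dvd_sub ha hb)).not_gt hba

theorem affT_left : affT n a b a = b := by
  rw [affT_of_dvd_sub_left (by simp)]; ring

theorem affT_right (hab : a < b) (hba : b - a < n) : affT n a b b = a := by
  rw [affT_of_dvd_sub_right (fun h => false_of_dvd_sub_of_dvd_sub hab hba h (by simp)) (by simp)]
  ring

theorem affT_of_mem_Ioo (hba : b - a < n) (hai : a < i) (hib : i < b) : affT n a b i = i :=
  affT_of_not_dvd (fun h => (Int.le_of_dvd (by omega) h).not_gt (by omega))
    (fun h => (Int.le_of_dvd (by omega) (dvd_neg.2 h)).not_gt (by omega))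

theorem sub_le_affT (hab : a ≤ b) : i - (b - a) ≤ affT n a b i := by
  unfold affT; split_ifs <;> omega

theorem le_affT_of_not_dvd (hab : a ≤ b) (h : ¬ n ∣ i - b) : i ≤ affT n a b i := by
  by_cases ha : n ∣ i - a
  · rw [affT_of_dvd_sub_left ha]; omega
  · rw [affT_of_not_dvd ha h]

theorem affT_involutive (hab : a < b) (hba : b - a < n) : Function.Involutive (affT n a b) := by
  intro i
  by_cases ha : n ∣ i - a
  · have hb : n ∣ i + (b - a) - b := by rwa [show i + (b - a) - b = i - a by ring]
    rw [affT_of_dvd_sub_left ha,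
      affT_of_dvd_sub_right (fun ha' => false_of_dvd_sub_of_dvd_sub hab hba ha' hb) hb]
    ring
  · by_cases hb : n ∣ i - b
    · have ha' : n ∣ i - (b - a) - a := by rwa [show i - (b - a) - a = i - b by ring]
      rw [affT_of_dvd_sub_right ha hb, affT_of_dvd_sub_left ha']; ring
    · rw [affT_of_not_dvd ha hb, affT_of_not_dvd ha hb]

end Transposition

section Representatives

variable {n a b : ℤ}

noncomputable def affTInvReps (a b : ℤ) : Finset (ℤ × ℤ) :=
  insert (a, b) ((Finset.Ioo a b).image (Prod.mk a) ∪ (Finset.Ioo a b).image (fun c => (c, b)))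

theorem mem_affTInvReps (hab : a < b) {p : ℤ × ℤ} :
    p ∈ affTInvReps a b ↔ (p.1 = a ∧ a < p.2 ∧ p.2 ≤ b) ∨ (a < p.1 ∧ p.1 < b ∧ p.2 = b) := by
  obtain ⟨i, j⟩ := p
  simp only [affTInvReps, Finset.mem_insert, Finset.mem_union, Finset.mem_image, Finset.mem_Ioo,
    Prod.mk.injEq]
  constructor
  · rintro (⟨rfl, rfl⟩ | ⟨c, hc, rfl, rfl⟩ | ⟨c, hc, rfl, rfl⟩) <;> omega
  · rintro (⟨rfl, h1, h2⟩ | ⟨h1, h2, rfl⟩)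
    · rcases h2.lt_or_eq with h2 | rfl
      · exact Or.inr (Or.inl ⟨j, ⟨h1, h2⟩, rfl, rfl⟩)
      · exact Or.inl ⟨rfl, rfl⟩
    · exact Or.inr (Or.inr ⟨i, ⟨h1, h2⟩, rfl, rfl⟩)

theorem affTInvReps_subset_invPairs (hab : a < b) (hba : b - a < n) :
    ↑(affTInvReps a b) ⊆ invPairs (affT n a b) := by
  rintro ⟨i, j⟩ hp
  rcases (mem_affTInvReps hab).1 hp with ⟨rfl, h1, h2⟩ | ⟨h1, h2, rfl⟩
  · refine ⟨h1, ?_⟩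
    rw [affT_left]
    rcases h2.lt_or_eq with h2 | rfl
    · rw [affT_of_mem_Ioo hba h1 h2]; exact h2
    · rw [affT_right hab hba]; exact hab
  · refine ⟨h2, ?_⟩
    rw [affT_right hab hba, affT_of_mem_Ioo hba h1 h2]; exact h1

theorem injOn_mk_affTInvReps (hab : a < b) (hba : b - a < n) :
    Set.InjOn ((↑) : ℤ × ℤ → DiagQuot n) ↑(affTInvReps a b) := by
  refine injOn_mk_of_abs_fst_sub_lt fun p hp q hq => ?_
  rcases (mem_affTInvReps hab).1 hp with hp | hp <;>
    rcases (mem_affTInvReps hab).1 hq with hq | hq <;> rw [abs_lt] <;> omega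

theorem exists_add_smul_mem_affTInvReps (hab : a < b) (hba : b - a < n) {p : ℤ × ℤ}
    (hp : p ∈ invPairs (affT n a b)) : ∃ m : ℤ, p + m • (n, n) ∈ affTInvReps a b := by
  obtain ⟨i, j⟩ := p
  obtain ⟨hij, h⟩ : i < j ∧ affT n a b j < affT n a b i := hp
  simp only [mem_affTInvReps hab, fst_add_smul, snd_add_smul]
  -- `t` moves every integer by at most `b - a`, so `t j < t i` forces `i ≡ a` or `j ≡ b`.
  by_cases hia : n ∣ i - a
  · obtain ⟨q, hq⟩ := hia
    rw [affT_of_dvd_sub_left ⟨q, hq⟩] at h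
    rw [mul_comm] at hq
    refine ⟨-q, Or.inl ?_⟩
    rw [neg_mul]
    by_cases hjb : n ∣ j - b
    · have hja : ¬ n ∣ j - a := fun hja => false_of_dvd_sub_of_dvd_sub hab hba hja hjb
      rw [affT_of_dvd_sub_right hja hjb] at h
      have hd : n ∣ j - i - (b - a) := by
        rw [show j - i - (b - a) = j - b - (i - a) by ring, hq]
        exact dvd_sub hjb (dvd_mul_left n q)
      have := Int.eq_zero_of_abs_lt_dvd hd (by rw [abs_lt]; omega)
      omega
    · have := le_affT_of_not_dvd (n := n) hab.le hjb
      omega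
  · by_cases hib : n ∣ i - b
    · have := sub_le_affT (n := n) (i := j) hab.le
      rw [affT_of_dvd_sub_right hia hib] at h
      omega
    · rw [affT_of_not_dvd hia hib] at h
      have hjb : n ∣ j - b := by
        by_contra hjb
        have := le_affT_of_not_dvd (n := n) hab.le hjb
        omega
      have hja : ¬ n ∣ j - a := fun hja => false_of_dvd_sub_of_dvd_sub hab hba hja hjb
      rw [affT_of_dvd_sub_right hja hjb] at h
      obtain ⟨q, hq⟩ := hjb
      rw [mul_comm] at hq
      exact ⟨-q, Or.inr (by rw [neg_mul]; omega)⟩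

end Representatives

section LengthFormula

variable {n a b : ℤ} {u : ℤ → ℤ}

theorem ncard_diagOrbits_invPairs_affT_inter (hab : a < b) (hba : b - a < n) {S : Set (ℤ × ℤ)}
    (hS : ShiftInvariant n S) :
    (diagOrbits n (invPairs (affT n a b) ∩ S)).ncard = (↑(affTInvReps a b) ∩ S).ncard := by
  rw [diagOrbits_inter_eq (affTInvReps_subset_invPairs hab hba)
      (fun _ hp => exists_add_smul_mem_affTInvReps hab hba hp) hS, diagOrbits,
    ((injOn_mk_affTInvReps hab hba).mono Set.inter_subset_left).ncard_image]

theorem invPairs_comp_inter_compl {t : ℤ → ℤ} (ht : Function.Involutive t) (u : ℤ → ℤ) :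
    invPairs (u ∘ t) ∩ (invPairs t)ᶜ = Prod.map t t ⁻¹' (invPairs u ∩ (invPairs t)ᶜ) := by
  ext ⟨i, j⟩
  simp only [invPairs, Set.mem_inter_iff, Set.mem_compl_iff, Set.mem_preimage, Prod.map,
    Set.mem_ofPred_eq, Function.comp, ht i, ht j]
  have := ht.injective.ne_iff (x := i) (y := j)
  omega

theorem invPairs_comp_inter {t : ℤ → ℤ} (ht : Function.Involutive t) (hu : Function.Injective u) :
    invPairs (u ∘ t) ∩ invPairs t =
      (Prod.swap ∘ Prod.map t t) ⁻¹' (invPairs t ∩ (invPairs u)ᶜ) := by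
  ext ⟨i, j⟩
  simp only [invPairs, Set.mem_inter_iff, Set.mem_compl_iff, Set.mem_preimage, Prod.map,
    Prod.swap, Set.mem_ofPred_eq, Function.comp, ht i, ht j]
  have := hu.ne_iff (x := t i) (y := t j)
  have := ht.injective.ne_iff (x := i) (y := j)
  omega

theorem sum_sign_eq_ncard_sub_ncard {X : Finset (ℤ × ℤ)} (hX : ∀ p ∈ X, p.1 < p.2) :
    (∑ p ∈ X, if u p.2 < u p.1 then (-1 : ℤ) else 1) =
      (↑X ∩ (invPairs u)ᶜ).ncard - (↑X ∩ invPairs u).ncard := by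
  have hinv : ↑X ∩ invPairs u = ↑(X.filter fun p => u p.2 < u p.1) := by
    ext p
    simp only [Finset.coe_filter, Set.mem_inter_iff, Finset.mem_coe]
    exact ⟨fun h => ⟨h.1, h.2.2⟩, fun h => ⟨h.1, hX p h.1, h.2⟩⟩
  have hninv : ↑X ∩ (invPairs u)ᶜ = ↑(X.filter fun p => ¬ u p.2 < u p.1) := by
    ext p
    simp only [Finset.coe_filter, Set.mem_inter_iff, Finset.mem_coe]
    exact ⟨fun h => ⟨h.1, fun h' => h.2 ⟨hX p h.1, h'⟩⟩, fun h => ⟨h.1, fun h' => h.2 h'.2⟩⟩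
  rw [hinv, hninv, Set.ncard_coe_finset, Set.ncard_coe_finset, Finset.sum_ite]
  simp only [Finset.sum_const]
  ring

theorem affLen_comp_affT (hab : a < b) (hba : b - a < n) (hu : Function.Injective u)
    (hv : ∀ i, u (i + n) = u i + n) :
    (affLen n (u ∘ affT n a b) : ℤ) =
      affLen n u + ∑ p ∈ affTInvReps a b, if u p.2 < u p.1 then -1 else 1 := by
  set t := affT n a b
  have hn : 0 < n := by omega
  have ht : Function.Involutive t := affT_involutive hab hba
  have htn (i : ℤ) : t (i + n) = t i + n := by simpa using affT_add_mul (a := a) (b := b) i 1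
  have hutn (i : ℤ) : (u ∘ t) (i + n) = (u ∘ t) i + n := by simp only [Function.comp, htn, hv]
  have hτ (p : ℤ × ℤ) (m : ℤ) : Prod.map t t (p + m • (n, n)) = Prod.map t t p + m • (n, n) := by
    ext <;> simp [t, affT_add_mul]
  have hτ' (p : ℤ × ℤ) (m : ℤ) :
      (Prod.swap ∘ Prod.map t t) (p + m • (n, n)) = (Prod.swap ∘ Prod.map t t) p + m • (n, n) := by
    ext <;> simp [t, affT_add_mul]
  have hU := shiftInvariant_invPairs hv
  rw [affLen_eq_ncard_diagOrbits hn hutn, affLen_eq_ncard_diagOrbits hn hv,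
    ncard_diagOrbits_eq_add (shiftInvariant_invPairs hutn) (shiftInvariant_invPairs htn)
      (finite_diagOrbits_invPairs hn hutn),
    ncard_diagOrbits_eq_add hU (shiftInvariant_invPairs htn) (finite_diagOrbits_invPairs hn hv),
    invPairs_comp_inter_compl ht, invPairs_comp_inter ht hu,
    ncard_diagOrbits_preimage (ht.prodMap ht) hτ,
    ncard_diagOrbits_preimage (fun ⟨i, j⟩ => by simp [ht i, ht j]) hτ',
    Set.inter_comm (invPairs u) (invPairs t),
    ncard_diagOrbits_invPairs_affT_inter hab hba hU,
    ncard_diagOrbits_invPairs_affT_inter hab hba hU.compl,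
    sum_sign_eq_ncard_sub_ncard fun p hp =>
      (affTInvReps_subset_invPairs (n := n) hab hba (Finset.mem_coe.2 hp)).1]
  push_cast
  ring

end LengthFormula

section Combinatorics

variable {a b : ℤ} {u : ℤ → ℤ}

theorem sum_affTInvReps {M : Type*} [AddCommMonoid M] (f : ℤ × ℤ → M) :
    ∑ p ∈ affTInvReps a b, f p = f (a, b) + ∑ c ∈ Finset.Ioo a b, (f (a, c) + f (c, b)) := by
  rw [affTInvReps, Finset.sum_insert, Finset.sum_union, Finset.sum_image, Finset.sum_image,
    Finset.sum_add_distrib]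
  · intro c _ c' _ h; exact congrArg Prod.fst h
  · intro c _ c' _ h; exact congrArg Prod.snd h
  · simp only [Finset.disjoint_left, Finset.mem_image, Finset.mem_Ioo, not_exists, not_and]
    rintro _ ⟨c, hc, rfl⟩ c' hc' h
    simp only [Prod.mk.injEq] at h
    omega
  · simp only [Finset.mem_union, Finset.mem_image, Finset.mem_Ioo, Prod.mk.injEq]
    omega

theorem sum_sign_affTInvReps_eq_one_iff (hab : a < b) (hu : Function.Injective u) :
    (∑ p ∈ affTInvReps a b, if u p.2 < u p.1 then (-1 : ℤ) else 1) = 1 ↔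
      u a < u b ∧ ∀ i, a < i → i < b → u i < u a ∨ u b < u i := by
  rw [sum_affTInvReps]
  have hne {c : ℤ} (hc : c ∈ Finset.Ioo a b) : u c ≠ u a ∧ u c ≠ u b := by
    rw [Finset.mem_Ioo] at hc
    exact ⟨hu.ne (by omega), hu.ne (by omega)⟩
  rcases lt_or_gt_of_ne (hu.ne hab.ne) with hlt | hgt
  · have hs {c : ℤ} (hc : c ∈ Finset.Ioo a b) :
        0 ≤ (if u c < u a then (-1 : ℤ) else 1) + (if u b < u c then -1 else 1) ∧
          ((if u c < u a then (-1 : ℤ) else 1) + (if u b < u c then -1 else 1) = 0 ↔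
            u c < u a ∨ u b < u c) := by
      obtain ⟨h1, h2⟩ := hne hc
      split_ifs <;> omega
    rw [if_neg hlt.not_gt, add_eq_left, Finset.sum_eq_zero_iff_of_nonneg fun c hc => (hs hc).1]
    simp only [hlt, true_and, Finset.mem_Ioo]
    exact forall_congr' fun c =>
      ⟨fun h hai hib => (hs (Finset.mem_Ioo.2 ⟨hai, hib⟩)).2.1 (h ⟨hai, hib⟩),
        fun h hc => (hs (Finset.mem_Ioo.2 hc)).2.2 (h hc.1 hc.2)⟩
  · refine iff_of_false (fun h => ?_) fun h => hgt.not_gt h.1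
    have : ∑ c ∈ Finset.Ioo a b,
        ((if u c < u a then (-1 : ℤ) else 1) + (if u b < u c then -1 else 1)) ≤ 0 :=
      Finset.sum_nonpos fun c hc => by
        obtain ⟨h1, h2⟩ := hne hc
        split_ifs <;> omega
    rw [if_pos hgt] at h
    dsimp only at h
    omega

end Combinatorics

theorem stmt0_general (k : ℤ) (u : ℤ → ℤ)
    (hu : IsAffinePerm (k + 1) u)
    (a b : ℤ) (hab : a < b) (hba : b - a ≤ k) :
    affLen (k + 1) (u ∘ affT (k + 1) a b) = affLen (k + 1) u + 1 ↔
      (u a < u b ∧ ∀ i : ℤ, a < i → i < b → u i < u a ∨ u b < u i) := by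
  obtain ⟨hbij, hper, -⟩ := hu
  have hlen := affLen_comp_affT (n := k + 1) hab (by omega) hbij.injective hper
  rw [← sum_sign_affTInvReps_eq_one_iff hab hbij.injective]
  omega

theorem stmt0 (k : ℤ) (hk : 1 ≤ k) (u : ℤ → ℤ)
    (hu : IsAffinePerm (k + 1) u)
    (a b : ℤ) (hab : a < b) (hba : b - a ≤ k) :
    affLen (k + 1) (u ∘ affT (k + 1) a b) = affLen (k + 1) u + 1 ↔
      (u a < u b ∧ ∀ i : ℤ, a < i → i < b → u i < u a ∨ u b < u i) :=
  stmt0_general k u hu a b hab hba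
end

section
/- If u is a 0-grassmannian affine permutation and the operator t_{a,b} is defined at u, then u ∘ t_{a,b} is again a 0-grassmannian affine permutation. -/
open Function

/-! The transposition `t = affT n a b` commutes with translation by `n` and is an involution, so
`u ∘ t` is again a periodic bijection. Its window sum is unchanged: `u ∘ t - u` is `n`-periodic,
so it may be summed over the window `[a, a + n)` instead of `[1, n]`, where only `a` and `b`
contribute, with `(u b - u a) + (u a - u b) = 0`.

For the grassmannian condition let `P < Q` carry values `1 ≤ u P < u Q ≤ n`; it suffices that
`t P < t Q`. A position `a + p n` carrying a value `≥ 1` has `p ≥ 1`, and a position `b + q n`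
carrying a value `≤ n` has `q ≤ 0`. The order can only be reversed if `P = a + p n` jumps over a
fixed point `Q ∈ (a + p n, b + p n)`, or `Q = b + q n` drops below a fixed point
`P ∈ (a + q n, b + q n)`. The `DefinedAt` condition translated by `p n` (resp. `q n`) then puts
the value at the fixed point below `u P` or above `u Q`, or outside `[1, n]`. -/

open Finset

theorem Function.Periodic.sum_Ico_add_eq {M : Type*} [AddCancelCommMonoid M] {g : ℤ → M} {n : ℤ}
    (hg : Periodic g n) (c d : ℤ) :
    ∑ i ∈ Ico c (c + n), g i = ∑ i ∈ Ico d (d + n), g i := by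
  have step : ∀ c, ∑ i ∈ Ico (c + 1) (c + 1 + n), g i = ∑ i ∈ Ico c (c + n), g i := by
    intro c
    rcases lt_or_ge n 0 with hn | hn
    · rw [Ico_eq_empty (by omega), Ico_eq_empty (by omega)]
    have h_top := sum_Ico_add_eq_sum_Ico_add_one (show c ≤ c + n by omega) g
    have h_bot := add_sum_Ioo_eq_sum_Ico (f := g) (show c < c + 1 + n by omega)
    rw [← Ico_add_one_left_eq_Ioo] at h_bot
    rw [hg c, add_right_comm, ← h_bot, add_comm] at h_top
    exact (add_left_cancel h_top).symm
  suffices h : ∀ c, ∑ i ∈ Ico c (c + n), g i = ∑ i ∈ Ico 0 (0 + n), g i by rw [h c, h d]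
  intro c
  induction c using Int.induction_on with
  | zero => rfl
  | succ i ih => rw [step, ih]
  | pred i ih =>
    have := step (-i - 1)
    rw [sub_add_cancel] at this
    rw [← this, ih]

lemma Int.eq_zero_of_abs_mul_lt {m n : ℤ} (h : |m * n| < n) : m = 0 := by
  have hn : 0 < n := (abs_nonneg _).trans_lt h
  exact (mul_eq_zero.1 (Int.eq_zero_of_abs_lt_dvd (dvd_mul_left n m) h)).resolve_right hn.ne'

section AffineTransposition

variable {n a b : ℤ}

lemma affT_left_add_mul (m : ℤ) : affT n a b (a + m * n) = b + m * n := by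
  simp only [affT, add_sub_cancel_left, Int.mul_emod_left, if_true]
  ring

lemma affT_right_add_mul (hd : 0 < b - a) (hdn : b - a < n) (m : ℤ) :
    affT n a b (b + m * n) = a + m * n := by
  have hba : (b + m * n - a) % n ≠ 0 := by
    rw [show b + m * n - a = b - a + m * n by ring, Int.add_mul_emod_self_right,
      Int.emod_eq_of_lt hd.le hdn]
    exact hd.ne'
  simp only [affT, hba, add_sub_cancel_left, Int.mul_emod_left, if_true, if_false]
  ring

lemma affT_of_forall_ne {i : ℤ} (ha : ∀ m, i ≠ a + m * n) (hb : ∀ m, i ≠ b + m * n) :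
    affT n a b i = i := by
  have not_class {c : ℤ} (hc : ∀ m, i ≠ c + m * n) : (i - c) % n ≠ 0 := fun h => by
    obtain ⟨m, hm⟩ := Int.dvd_of_emod_eq_zero h
    exact hc m (by linarith [mul_comm n m])
  simp only [affT, not_class ha, not_class hb, if_false]

lemma affT_trichotomy (hd : 0 < b - a) (hdn : b - a < n) (i : ℤ) :
    (∃ m, i = a + m * n ∧ affT n a b i = b + m * n) ∨
      (∃ m, i = b + m * n ∧ affT n a b i = a + m * n) ∨
      (affT n a b i = i ∧ (∀ m, i ≠ a + m * n) ∧ ∀ m, i ≠ b + m * n) := by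
  by_cases ha : ∃ m, i = a + m * n
  · obtain ⟨m, rfl⟩ := ha
    exact Or.inl ⟨m, rfl, affT_left_add_mul m⟩
  by_cases hb : ∃ m, i = b + m * n
  · obtain ⟨m, rfl⟩ := hb
    exact Or.inr (Or.inl ⟨m, rfl, affT_right_add_mul hd hdn m⟩)
  push Not at ha hb
  exact Or.inr (Or.inr ⟨affT_of_forall_ne ha hb, ha, hb⟩)

lemma affT_involutive_s1 (hd : 0 < b - a) (hdn : b - a < n) : Involutive (affT n a b) := by
  intro i
  rcases affT_trichotomy hd hdn i with ⟨m, rfl, h⟩ | ⟨m, rfl, h⟩ | ⟨h, -⟩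
  · rw [h, affT_right_add_mul hd hdn]
  · rw [h, affT_left_add_mul]
  · rw [h, h]

lemma affT_add_period (i : ℤ) : affT n a b (i + n) = affT n a b i + n := by
  simp only [affT, show ∀ c, i + n - c = i - c + n from fun c => by ring, Int.add_emod_right]
  split_ifs <;> ring

end AffineTransposition

section AffinePermutation

variable {n a b : ℤ} {u : ℤ → ℤ}

lemma apply_add_int_mul (hper : ∀ i, u (i + n) = u i + n) (x m : ℤ) :
    u (x + m * n) = u x + m * n := by
  have h : Periodic (fun i => u i - i) n := fun i => by simp only [hper]; ring
  have := h.int_mul m x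
  simp only [Int.cast_id] at this
  linarith

lemma sum_Icc_comp_affT (hd : 0 < b - a) (hdn : b - a < n) (hper : ∀ i, u (i + n) = u i + n) :
    ∑ i ∈ Icc 1 n, u (affT n a b i) = ∑ i ∈ Icc 1 n, u i := by
  set g := fun i => u (affT n a b i) - u i with hg_def
  have hg : Periodic g n := fun i => by simp only [hg_def, affT_add_period, hper]; ring
  have h_fix : ∀ c ∈ Ico a (a + n), c ≠ a ∧ c ≠ b → g c = 0 := by
    rintro c hc ⟨hca, hcb⟩
    rw [mem_Ico] at hc
    have eq_of_eq_add_mul {m x : ℤ} (hm : c = x + m * n) (hx : |c - x| < n) : c = x := by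
      obtain rfl := Int.eq_zero_of_abs_mul_lt (m := m) (by rwa [hm, add_sub_cancel_left] at hx)
      simpa using hm
    refine sub_eq_zero.2 (congrArg u (affT_of_forall_ne (fun m hm => hca ?_) (fun m hm => hcb ?_)))
    · exact eq_of_eq_add_mul hm (abs_lt.2 ⟨by omega, by omega⟩)
    · exact eq_of_eq_add_mul hm (abs_lt.2 ⟨by omega, by omega⟩)
  have h_left : affT n a b a = b := by simpa using affT_left_add_mul (n := n) (a := a) (b := b) 0
  have h_right : affT n a b b = a := by simpa using affT_right_add_mul hd hdn 0
  have : ∑ i ∈ Icc 1 n, g i = 0 := calc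
    ∑ i ∈ Icc 1 n, g i = ∑ i ∈ Ico a (a + n), g i := by
      rw [← Ico_add_one_right_eq_Icc, add_comm, hg.sum_Ico_add_eq]
    _ = g a + g b := sum_eq_add_of_mem a b (mem_Ico.2 ⟨le_rfl, by omega⟩) (mem_Ico.2 ⟨by omega, by omega⟩)
      (by omega) h_fix
    _ = 0 := by simp only [hg_def, h_left, h_right]; ring
  rwa [sum_sub_distrib, sub_eq_zero] at this

lemma IsAffinePerm.comp_affT (hd : 0 < b - a) (hdn : b - a < n)
    (hu : IsAffinePerm n u) : IsAffinePerm n (u ∘ affT n a b) := by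
  obtain ⟨hbij, hper, hsum⟩ := hu
  refine ⟨hbij.comp (affT_involutive_s1 hd hdn).bijective, fun i => ?_, ?_⟩
  · simp only [comp_apply, affT_add_period, hper]
  · rw [← hsum]
    exact sum_Icc_comp_affT hd hdn hper

end AffinePermutation

section Grassmannian

variable {n a b : ℤ} {u : ℤ → ℤ}

lemma DefinedAt.apply_lt_or_lt_apply (hper : ∀ i, u (i + n) = u i + n) (hdef : DefinedAt u a b)
    {m x : ℤ} (hax : a + m * n < x) (hxb : x < b + m * n) :
    u x < u a + m * n ∨ u b + m * n < u x := by
  have hx := apply_add_int_mul hper (x - m * n) m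
  rw [sub_add_cancel] at hx
  rcases hdef.2.2 (x - m * n) (by omega) (by omega) with h | h
  · exact Or.inl (by omega)
  · exact Or.inr (by omega)

lemma one_le_of_one_le_apply_add_mul (hper : ∀ i, u (i + n) = u i + n) (hn : 0 < n)
    (ha : u a ≤ 0) {p : ℤ} (h : 1 ≤ u (a + p * n)) : 1 ≤ p := by
  rw [apply_add_int_mul hper] at h
  nlinarith

lemma nonpos_of_apply_add_mul_le (hper : ∀ i, u (i + n) = u i + n) (hn : 0 < n)
    (hb : 0 < u b) {q : ℤ} (h : u (b + q * n) ≤ n) : q ≤ 0 := by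
  rw [apply_add_int_mul hper] at h
  nlinarith

lemma affT_lt_affT_of_lt (hd : 0 < b - a) (hdn : b - a < n) (hper : ∀ i, u (i + n) = u i + n)
    (hdef : DefinedAt u a b) {P Q : ℤ} (hPQ : P < Q) (hP : 1 ≤ u P) (hPQu : u P < u Q)
    (hQ : u Q ≤ n) : affT n a b P < affT n a b Q := by
  have hn : 0 < n := by omega
  have shift := apply_add_int_mul hper
  rcases affT_trichotomy hd hdn P with ⟨p, rfl, hP'⟩ | ⟨p, rfl, hP'⟩ | ⟨hP', hPa, -⟩ <;>
    rcases affT_trichotomy hd hdn Q with ⟨q, rfl, hQ'⟩ | ⟨q, rfl, hQ'⟩ | ⟨hQ', -, hQb⟩ <;>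
    rw [hP', hQ'] <;> try omega
  · have hp := one_le_of_one_le_apply_add_mul hper hn hdef.1 hP
    have hq := nonpos_of_apply_add_mul_le hper hn hdef.2.1 hQ
    nlinarith
  · by_contra h
    have hp := one_le_of_one_le_apply_add_mul hper hn hdef.1 hP
    rcases hdef.apply_lt_or_lt_apply hper hPQ (lt_of_le_of_ne (not_lt.1 h) (hQb p)) with h' | h'
    · rw [shift] at hPQu
      omega
    · nlinarith [hdef.2.1]
  · by_contra h
    have hq := nonpos_of_apply_add_mul_le hper hn hdef.2.1 hQ
    rcases hdef.apply_lt_or_lt_apply hper (lt_of_le_of_ne (not_lt.1 h) (hPa q).symm) hPQ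
      with h' | h'
    · nlinarith [hdef.1]
    · rw [shift] at hPQu
      omega

lemma IsGrassmannian.comp_affT (hd : 0 < b - a) (hdn : b - a < n)
    (hper : ∀ i, u (i + n) = u i + n) (hdef : DefinedAt u a b) (hg : IsGrassmannian n u) :
    IsGrassmannian n (u ∘ affT n a b) := by
  intro i j p q hi hij hj hp hq
  simp only [comp_apply] at hp hq
  have h := affT_lt_affT_of_lt hd hdn hper hdef (hg i j _ _ hi hij hj hp hq) (by omega) (by omega)
    (by omega)
  rwa [affT_involutive_s1 hd hdn p, affT_involutive_s1 hd hdn q] at h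

end Grassmannian

theorem stmt1_general (k : ℤ) (u : ℤ → ℤ)
    (hu : IsAffinePerm (k + 1) u) (hg : IsGrassmannian (k + 1) u)
    (a b : ℤ) (hab : a < b) (hba : b - a ≤ k)
    (hdef : DefinedAt u a b) :
    IsAffinePerm (k + 1) (u ∘ affT (k + 1) a b) ∧
      IsGrassmannian (k + 1) (u ∘ affT (k + 1) a b) := by
  have hd : 0 < b - a := by omega
  have hdn : b - a < k + 1 := by omega
  exact ⟨hu.comp_affT hd hdn, hg.comp_affT hd hdn hu.2.1 hdef⟩

theorem stmt1 (k : ℤ) (hk : 1 ≤ k) (u : ℤ → ℤ)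
    (hu : IsAffinePerm (k + 1) u) (hg : IsGrassmannian (k + 1) u)
    (a b : ℤ) (hab : a < b) (hba : b - a ≤ k)
    (hdef : DefinedAt u a b) :
    IsAffinePerm (k + 1) (u ∘ affT (k + 1) a b) ∧
      IsGrassmannian (k + 1) (u ∘ affT (k + 1) a b) :=
  stmt1_general k u hu hg a b hab hba hdef
end

section
/- Relation (A): Let u be a 0-grassmannian affine permutation and let a < b, c < d be integers with b − a ≤ k, d − c ≤ k, such that the residues of a, b, c, d modulo n are pairwise distinct. Then the composite u·t_{a,b}·t_{c,d} is defined if and only if the composite u·t_{c,d}·t_{a,b} is defined, and in that case the two resulting affine permutations are equal. -/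
/-!
Distinct residues make `t_{a,b}` and `t_{c,d}` commute, so only definedness needs an argument,
and by symmetry only one implication. Passing from `u` to `u·t_{a,b}` swaps the values at the
points congruent to `a` and `b`, and the condition that no `i` strictly between `a` and `b` has
`u i` in `[u a, u b]` is invariant under shifting `a` and `b` by the same multiple of `n`. So every
check comes down to the relative order of the positions and of the values at `a, b, c, d`
themselves, and a short case analysis shows that the window `(c, d)` is empty for `u` and that
the window `(a, b)` is empty for `u·t_{c,d}`.
-/

open Function

/-- `DefinedAt u a b` is `u a ≤ 0 ∧ 0 < u b ∧ EmptyRect u a b`; only the last part interacts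
with the transpositions. -/
def EmptyRect (u : ℤ → ℤ) (a b : ℤ) : Prop :=
  ∀ i, a < i → i < b → u i < u a ∨ u b < u i

section Transposition

variable {n a b : ℤ}

lemma affT_apply_of_modEq_left {i : ℤ} (h : a ≡ i [ZMOD n]) : affT n a b i = i - a + b :=
  if_pos (Int.emod_eq_zero_of_dvd h.dvd)

lemma affT_apply_of_modEq_right {i : ℤ} (hab : ¬ a ≡ b [ZMOD n]) (h : b ≡ i [ZMOD n]) :
    affT n a b i = i - b + a := by
  have hai : ¬ (i - a) % n = 0 := fun h' =>
    hab ((Int.modEq_iff_dvd.2 (Int.dvd_of_emod_eq_zero h')).trans h.symm)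
  exact (if_neg hai).trans (if_pos (Int.emod_eq_zero_of_dvd h.dvd))

lemma affT_apply_of_not_modEq {i : ℤ} (ha : ¬ a ≡ i [ZMOD n]) (hb : ¬ b ≡ i [ZMOD n]) :
    affT n a b i = i :=
  (if_neg fun h => ha (Int.modEq_iff_dvd.2 (Int.dvd_of_emod_eq_zero h))).trans
    (if_neg fun h => hb (Int.modEq_iff_dvd.2 (Int.dvd_of_emod_eq_zero h)))

lemma affT_add_mul_left (m : ℤ) : affT n a b (a + n * m) = b + n * m := by
  rw [affT_apply_of_modEq_left Int.modEq_add_fac_self.symm]; ring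

lemma affT_add_mul_right (hab : ¬ a ≡ b [ZMOD n]) (m : ℤ) :
    affT n a b (b + n * m) = a + n * m := by
  rw [affT_apply_of_modEq_right hab Int.modEq_add_fac_self.symm]; ring

lemma not_modEq_affT_apply {c i : ℤ} (hca : ¬ c ≡ a [ZMOD n]) (hcb : ¬ c ≡ b [ZMOD n])
    (hci : ¬ c ≡ i [ZMOD n]) : ¬ c ≡ affT n a b i [ZMOD n] := by
  unfold affT
  split_ifs with ha hb
  · have hb' : b ≡ i - a + b [ZMOD n] :=
      Int.modEq_iff_dvd.2 (by simpa using Int.dvd_of_emod_eq_zero ha)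
    exact fun h => hcb (h.trans hb'.symm)
  · have ha' : a ≡ i - b + a [ZMOD n] :=
      Int.modEq_iff_dvd.2 (by simpa using Int.dvd_of_emod_eq_zero hb)
    exact fun h => hca (h.trans ha'.symm)
  · exact hci

lemma affT_comm {c d : ℤ} (hac : ¬ a ≡ c [ZMOD n]) (had : ¬ a ≡ d [ZMOD n])
    (hbc : ¬ b ≡ c [ZMOD n]) (hbd : ¬ b ≡ d [ZMOD n]) :
    affT n a b ∘ affT n c d = affT n c d ∘ affT n a b := by
  funext i
  simp only [comp_apply]
  by_cases hcd : c ≡ i [ZMOD n] ∨ d ≡ i [ZMOD n]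
  · have hai : ¬ a ≡ i [ZMOD n] := fun h => hcd.elim
      (fun hc => hac (h.trans hc.symm)) (fun hd => had (h.trans hd.symm))
    have hbi : ¬ b ≡ i [ZMOD n] := fun h => hcd.elim
      (fun hc => hbc (h.trans hc.symm)) (fun hd => hbd (h.trans hd.symm))
    rw [affT_apply_of_not_modEq hai hbi, affT_apply_of_not_modEq
      (not_modEq_affT_apply hac had hai) (not_modEq_affT_apply hbc hbd hbi)]
  · rw [not_or] at hcd
    rw [affT_apply_of_not_modEq hcd.1 hcd.2, affT_apply_of_not_modEq
      (not_modEq_affT_apply (mt Int.ModEq.symm hac) (mt Int.ModEq.symm hbc) hcd.1)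
      (not_modEq_affT_apply (mt Int.ModEq.symm had) (mt Int.ModEq.symm hbd) hcd.2)]

end Transposition

section Window

variable {n : ℤ} {u : ℤ → ℤ} {a b c d : ℤ}

lemma map_add_mul_of_map_add (hu : ∀ i, u (i + n) = u i + n) (i m : ℤ) :
    u (i + n * m) = u i + n * m := by
  have hper : Periodic (fun i => u i - i) n := fun i => by simp only [hu]; ring
  have h : u (i + m * n) - (i + m * n) = u i - i := hper.int_mul m i
  rw [mul_comm m n] at h
  linarith

lemma EmptyRect.add_mul (hu : ∀ i m, u (i + n * m) = u i + n * m) (h : EmptyRect u a b)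
    (m : ℤ) : EmptyRect u (a + n * m) (b + n * m) := by
  intro i hai hib
  have hi := hu (i - n * m) m
  rw [sub_add_cancel] at hi
  rw [hu, hu]
  exact (h (i - n * m) (by linarith) (by linarith)).imp (fun _ => by linarith)
    fun _ => by linarith

/- In the next four lemmas, `hva` and `hvb` are the emptiness of the window `(c, d)` for
`u ∘ affT n a b` read at `a` and `b`, where that map takes the values `u b` and `u a`. -/
lemma EmptyRect.lt_or_lt_left_of_swap (h : EmptyRect u a b) (hu_ab : u a < u b)
    (had : a < d) (hbd : b ≠ d) (hva : u b < u c ∨ u d < u b)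
    (hvb : b < d → u a < u c ∨ u d < u a) : u a < u c ∨ u d < u a := by
  rcases hva with hbc | hdb
  · exact Or.inl (hu_ab.trans hbc)
  rcases hbd.lt_or_gt with hbd | hdb'
  · exact hvb hbd
  · exact Or.inr ((h d had hdb').resolve_right hdb.not_gt)

lemma EmptyRect.lt_or_lt_right_of_swap (h : EmptyRect u a b) (hu_ab : u a < u b)
    (hcb : c < b) (hac : a ≠ c) (hvb : u a < u c ∨ u d < u a)
    (hva : c < a → u b < u c ∨ u d < u b) : u b < u c ∨ u d < u b := by
  rcases hvb with hua_c | hda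
  · rcases hac.lt_or_gt with hac | hca
    · exact Or.inl ((h c hac hcb).resolve_left hua_c.not_gt)
    · exact hva hca
  · exact Or.inr (hda.trans hu_ab)

lemma EmptyRect.lt_or_lt_of_left_mem (h : EmptyRect u a b) (hu_cd : u c < u d)
    (hac : a < c) (hcb : c < b) (hcd : c < d) (hbd : b ≠ d)
    (hvb : b < d → u a < u c ∨ u d < u a) : u d < u a ∨ u b < u d := by
  rcases h c hac hcb with hca | hbc
  · rcases hbd.lt_or_gt with hbd | hdb
    · exact Or.inl ((hvb hbd).resolve_left hca.not_gt)
    · exact h d (hac.trans hcd) hdb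
  · exact Or.inr (hbc.trans hu_cd)

lemma EmptyRect.lt_or_lt_of_right_mem (h : EmptyRect u a b) (hu_cd : u c < u d)
    (had : a < d) (hdb : d < b) (hcd : c < d) (hac : a ≠ c)
    (hva : c < a → u b < u c ∨ u d < u b) : u c < u a ∨ u b < u c := by
  rcases h d had hdb with hda | hbd
  · exact Or.inl (hu_cd.trans hda)
  · rcases hac.lt_or_gt with hac | hca
    · exact h c hac (hcd.trans hdb)
    · exact Or.inr ((hva hca).resolve_right hbd.not_gt)

lemma EmptyRect.of_comp_affT (hu : ∀ i m, u (i + n * m) = u i + n * m)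
    (nab : ¬ a ≡ b [ZMOD n]) (nac : ¬ a ≡ c [ZMOD n]) (nad : ¬ a ≡ d [ZMOD n])
    (nbc : ¬ b ≡ c [ZMOD n]) (nbd : ¬ b ≡ d [ZMOD n]) (hab : a < b)
    (h : EmptyRect u a b) (hu_ab : u a < u b) (hv : EmptyRect (u ∘ affT n a b) c d) :
    EmptyRect u c d := by
  have hv' : ∀ i, c < i → i < d → u (affT n a b i) < u c ∨ u d < u (affT n a b i) := by
    simpa only [EmptyRect, comp_apply, affT_apply_of_not_modEq nac nbc,
      affT_apply_of_not_modEq nad nbd] using hv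
  intro i hci hid
  by_cases hai : a ≡ i [ZMOD n]
  · obtain ⟨m, rfl⟩ := Int.modEq_iff_add_fac.1 hai
    refine (h.add_mul hu m).lt_or_lt_left_of_swap (by rw [hu, hu]; linarith) hid ?_ ?_ ?_
    · rintro rfl; exact nbd Int.modEq_add_fac_self.symm
    · simpa only [affT_add_mul_left] using hv' _ hci hid
    · intro hbd
      simpa only [affT_add_mul_right nab] using hv' _ (by linarith) hbd
  by_cases hbi : b ≡ i [ZMOD n]
  · obtain ⟨m, rfl⟩ := Int.modEq_iff_add_fac.1 hbi
    refine (h.add_mul hu m).lt_or_lt_right_of_swap (by rw [hu, hu]; linarith) hci ?_ ?_ ?_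
    · rintro rfl; exact nac Int.modEq_add_fac_self.symm
    · simpa only [affT_add_mul_right nab] using hv' _ hci hid
    · intro hca
      simpa only [affT_add_mul_left] using hv' _ hca (by linarith)
  simpa only [affT_apply_of_not_modEq hai hbi] using hv' i hci hid

lemma EmptyRect.comp_affT_swap (hu : ∀ i m, u (i + n * m) = u i + n * m)
    (nab : ¬ a ≡ b [ZMOD n]) (nac : ¬ a ≡ c [ZMOD n]) (nad : ¬ a ≡ d [ZMOD n])
    (nbc : ¬ b ≡ c [ZMOD n]) (nbd : ¬ b ≡ d [ZMOD n]) (ncd : ¬ c ≡ d [ZMOD n])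
    (hcd : c < d) (h : EmptyRect u a b) (hu_cd : u c < u d)
    (hv : EmptyRect (u ∘ affT n a b) c d) :
    EmptyRect (u ∘ affT n c d) a b := by
  have hv' : ∀ i, c < i → i < d → u (affT n a b i) < u c ∨ u d < u (affT n a b i) := by
    simpa only [EmptyRect, comp_apply, affT_apply_of_not_modEq nac nbc,
      affT_apply_of_not_modEq nad nbd] using hv
  intro i hai hib
  simp only [comp_apply,
    affT_apply_of_not_modEq (mt Int.ModEq.symm nac) (mt Int.ModEq.symm nad),
    affT_apply_of_not_modEq (mt Int.ModEq.symm nbc) (mt Int.ModEq.symm nbd)]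
  by_cases hci : c ≡ i [ZMOD n]
  · obtain ⟨m, rfl⟩ := Int.modEq_iff_add_fac.1 hci
    rw [affT_add_mul_left]
    refine h.lt_or_lt_of_left_mem (by rw [hu, hu]; linarith) hai hib (by linarith) ?_ ?_
    · rintro rfl; exact nbd Int.modEq_add_fac_self
    · intro hbd
      have := hv' (b + n * -m) (by linarith) (by linarith)
      rw [affT_add_mul_right nab, hu] at this
      rw [hu, hu]
      exact this.imp (fun _ => by linarith) fun _ => by linarith
  by_cases hdi : d ≡ i [ZMOD n]
  · obtain ⟨m, rfl⟩ := Int.modEq_iff_add_fac.1 hdi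
    rw [affT_add_mul_right ncd]
    refine h.lt_or_lt_of_right_mem (by rw [hu, hu]; linarith) hai hib (by linarith) ?_ ?_
    · rintro rfl; exact nac Int.modEq_add_fac_self
    · intro hca
      have := hv' (a + n * -m) (by linarith) (by linarith)
      rw [affT_add_mul_left, hu] at this
      rw [hu, hu]
      exact this.imp (fun _ => by linarith) fun _ => by linarith
  simpa only [affT_apply_of_not_modEq hci hdi] using h i hai hib

lemma Def2.symm (hu : ∀ i m, u (i + n * m) = u i + n * m)
    (nab : ¬ a ≡ b [ZMOD n]) (nac : ¬ a ≡ c [ZMOD n]) (nad : ¬ a ≡ d [ZMOD n])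
    (nbc : ¬ b ≡ c [ZMOD n]) (nbd : ¬ b ≡ d [ZMOD n]) (ncd : ¬ c ≡ d [ZMOD n])
    (hab : a < b) (hcd : c < d) (h : Def2 n u a b c d) : Def2 n u c d a b := by
  obtain ⟨⟨hua, hub, hv_ab⟩, huc, hud, hv_cd⟩ := h
  simp only [comp_apply, affT_apply_of_not_modEq nac nbc, affT_apply_of_not_modEq nad nbd]
    at huc hud
  refine ⟨⟨huc, hud, ?_⟩, ?_, ?_, ?_⟩
  · exact EmptyRect.of_comp_affT hu nab nac nad nbc nbd hab hv_ab (hua.trans_lt hub) hv_cd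
  · simpa only [comp_apply, affT_apply_of_not_modEq (mt Int.ModEq.symm nac)
      (mt Int.ModEq.symm nad)] using hua
  · simpa only [comp_apply, affT_apply_of_not_modEq (mt Int.ModEq.symm nbc)
      (mt Int.ModEq.symm nbd)] using hub
  · exact EmptyRect.comp_affT_swap hu nab nac nad nbc nbd ncd hcd hv_ab (huc.trans_lt hud)
      hv_cd

end Window

theorem stmt3_general (k : ℤ) (u : ℤ → ℤ)
    (hu : IsAffinePerm (k + 1) u)
    (a b c d : ℤ) (hab : a < b) (hcd : c < d)
    (h1 : a % (k + 1) ≠ b % (k + 1)) (h2 : a % (k + 1) ≠ c % (k + 1))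
    (h3 : a % (k + 1) ≠ d % (k + 1)) (h4 : b % (k + 1) ≠ c % (k + 1))
    (h5 : b % (k + 1) ≠ d % (k + 1)) (h6 : c % (k + 1) ≠ d % (k + 1)) :
    (Def2 (k + 1) u a b c d ↔ Def2 (k + 1) u c d a b) ∧
      (Def2 (k + 1) u a b c d →
        (u ∘ affT (k + 1) a b) ∘ affT (k + 1) c d =
          (u ∘ affT (k + 1) c d) ∘ affT (k + 1) a b) := by
  have hper := map_add_mul_of_map_add hu.2.1
  have h2' : ¬ c ≡ a [ZMOD k + 1] := mt Int.ModEq.symm h2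
  have h3' : ¬ d ≡ a [ZMOD k + 1] := mt Int.ModEq.symm h3
  have h4' : ¬ c ≡ b [ZMOD k + 1] := mt Int.ModEq.symm h4
  have h5' : ¬ d ≡ b [ZMOD k + 1] := mt Int.ModEq.symm h5
  refine ⟨⟨Def2.symm hper h1 h2 h3 h4 h5 h6 hab hcd,
    Def2.symm hper h6 h2' h4' h3' h5' h1 hcd hab⟩, fun _ => ?_⟩
  rw [comp_assoc, comp_assoc, affT_comm h2 h3 h4 h5]

theorem stmt3 (k : ℤ) (hk : 1 ≤ k) (u : ℤ → ℤ)
    (hu : IsAffinePerm (k + 1) u) (hg : IsGrassmannian (k + 1) u)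
    (a b c d : ℤ) (hab : a < b) (hba : b - a ≤ k) (hcd : c < d) (hdc : d - c ≤ k)
    (h1 : a % (k + 1) ≠ b % (k + 1)) (h2 : a % (k + 1) ≠ c % (k + 1))
    (h3 : a % (k + 1) ≠ d % (k + 1)) (h4 : b % (k + 1) ≠ c % (k + 1))
    (h5 : b % (k + 1) ≠ d % (k + 1)) (h6 : c % (k + 1) ≠ d % (k + 1)) :
    (Def2 (k + 1) u a b c d ↔ Def2 (k + 1) u c d a b) ∧
      (Def2 (k + 1) u a b c d →
        (u ∘ affT (k + 1) a b) ∘ affT (k + 1) c d =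
          (u ∘ affT (k + 1) c d) ∘ affT (k + 1) a b) :=
  stmt3_general k u hu a b c d hab hcd h1 h2 h3 h4 h5 h6
end

section
/- Relation (F): Let u be a 0-grassmannian affine permutation and let a < b < c be integers with c − a ≤ k. Then neither the composite u·t_{b,c}·t_{a,b}·t_{b,c} nor the composite u·t_{a,b}·t_{b,c}·t_{a,b} is defined. -/
/-! Relation (F) is already forced by the definedness conditions at the first and third steps.
In `u·t_{b,c}·t_{a,b}·t_{b,c}` the middle factor fixes `c`, so the third step needs
`u (t_{b,c} c) = u b > 0`, while the first step needs `u b ≤ 0`. Symmetrically, in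
`u·t_{a,b}·t_{b,c}·t_{a,b}` the third step needs `u (t_{a,b} a) = u b ≤ 0`, while the first
needs `u b > 0`. Since `c - a` is less than the period, no two of `a, b, c` are congruent,
which is what makes the transpositions act as claimed. -/

open Function

theorem affT_apply_left (n a b : ℤ) : affT n a b a = b := by
  simp [affT]

theorem affT_apply_right {n a b : ℤ} (h : ¬ n ∣ b - a) : affT n a b b = a := by
  rw [Int.dvd_iff_emod_eq_zero] at h
  simp [affT, h]

theorem affT_apply_of_not_dvd {n a b i : ℤ} (ha : ¬ n ∣ i - a) (hb : ¬ n ∣ i - b) :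
    affT n a b i = i := by
  rw [Int.dvd_iff_emod_eq_zero] at ha hb
  simp [affT, ha, hb]

theorem Int.not_dvd_sub_of_lt {n x y : ℤ} (hxy : x < y) (hn : y - x < n) : ¬ n ∣ y - x :=
  fun h => by have := Int.eq_zero_of_dvd_of_nonneg_of_lt (by omega) hn h; omega

section Braid

variable {n : ℤ} {u : ℤ → ℤ} {a b c : ℤ}

theorem not_def3_bc_ab_bc (hab : a < b) (hbc : b < c) (hca : c - a < n) :
    ¬ Def3 n u b c a b b c := by
  rintro ⟨⟨hub, -, -⟩, -, -, hpos, -⟩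
  have hc : affT n a b c = c :=
    affT_apply_of_not_dvd (Int.not_dvd_sub_of_lt (by omega) hca)
      (Int.not_dvd_sub_of_lt hbc (by omega))
  rw [comp_apply, comp_apply, hc, affT_apply_right (Int.not_dvd_sub_of_lt hbc (by omega))]
    at hpos
  omega

theorem not_def3_ab_bc_ab (hab : a < b) (hbc : b < c) (hca : c - a < n) :
    ¬ Def3 n u a b b c a b := by
  rintro ⟨⟨-, hub, -⟩, -, hnonpos, -, -⟩
  have ha : affT n b c a = a :=
    affT_apply_of_not_dvd (dvd_sub_comm.not.mpr (Int.not_dvd_sub_of_lt hab (by omega)))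
      (dvd_sub_comm.not.mpr (Int.not_dvd_sub_of_lt (by omega) hca))
  rw [comp_apply, comp_apply, ha, affT_apply_left] at hnonpos
  omega

end Braid

theorem stmt10_general (k : ℤ) (u : ℤ → ℤ)
    (a b c : ℤ) (hab : a < b) (hbc : b < c) (hca : c - a ≤ k) :
    ¬ Def3 (k + 1) u b c a b b c ∧ ¬ Def3 (k + 1) u a b b c a b :=
  ⟨not_def3_bc_ab_bc hab hbc (by omega), not_def3_ab_bc_ab hab hbc (by omega)⟩

theorem stmt10 (k : ℤ) (hk : 1 ≤ k) (u : ℤ → ℤ)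
    (hu : IsAffinePerm (k + 1) u) (hg : IsGrassmannian (k + 1) u)
    (a b c : ℤ) (hab : a < b) (hbc : b < c) (hca : c - a ≤ k) :
    ¬ Def3 (k + 1) u b c a b b c ∧ ¬ Def3 (k + 1) u a b b c a b :=
  stmt10_general k u a b c hab hbc hca
end

section
/- Relation (X5): Let u be a 0-grassmannian affine permutation and let a < b < c < d be integers with b − a ≤ k and d − c ≤ k. Suppose b ≡ d (mod n), b − a > d − c, and u(d − b + a) > 0. If the composite u·t_{a,b}·t_{c,d} is defined, then the composite u·t_{c,d}·t_{a, b+c−d} is defined and the two resulting affine permutations are equal. -/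
open Function

/-! The residues of `a`, `b ≡ d` and `c` modulo `n` are pairwise distinct: were `c ≡ a`, the
permutation `u·t_{a,b}` would take the positive value `u b + (c - a)` at `c`. So `t_{c,d}` fixes `a`
and sends `b + c - d` to `b`, whence `t_{c,d} t_{a,b+c-d} t_{c,d} = t_{a,b}`: this is the equality.
For definedness, translation by the multiple `d - b` of `n` carries the window `(c, d)` into
`(a, b)` and shifts the values of `u` by the same amount, so the condition for `t_{a,b}` at `u`
transfers to `t_{c,d}`; the condition for `t_{c,d}` at `u·t_{a,b}` rules out the remaining case. -/

section

variable {n : ℕ} {u : ℤ → ℤ} {a b c d : ℤ}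

lemma affT_apply (n : ℕ) (a b x : ℤ) :
    affT n a b x =
      if (x : ZMod n) = a then x - a + b else if (x : ZMod n) = b then x - b + a else x := by
  have key (y : ℤ) : (x - y) % n = 0 ↔ (x : ZMod n) = y := by
    rw [← Int.dvd_iff_emod_eq_zero, ← ZMod.intCast_eq_intCast_iff_dvd_sub, eq_comm]
  simp only [affT, key]

lemma intCast_ne_of_lt_of_sub_lt {x y : ℤ} (hxy : x < y) (hyx : y - x < n) :
    (x : ZMod n) ≠ y := by
  rw [Ne, ZMod.intCast_eq_intCast_iff_dvd_sub]
  intro h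
  have := Int.le_of_dvd (by omega) h
  omega

lemma apply_eq_add_of_intCast_eq (hper : ∀ i, u (i + n) = u i + n) {x y : ℤ}
    (h : (x : ZMod n) = y) : u y = u x + (y - x) := by
  obtain ⟨m, hm⟩ := (ZMod.intCast_eq_intCast_iff_dvd_sub x y n).1 h
  have hp : Periodic (fun i => u i - i) (n : ℤ) := fun i => by simp only [hper]; ring
  have := hp.int_mul m x
  rw [Int.cast_id] at this
  rw [show y = x + m * n by linarith]
  linarith

lemma affT_comp_affT (hac : (a : ZMod n) ≠ c) (had : (a : ZMod n) ≠ d)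
    (hcd : (c : ZMod n) ≠ d) (hbd : (b : ZMod n) = d) :
    affT n a b ∘ affT n c d = affT n c d ∘ affT n a (b + c - d) := by
  funext x
  simp only [comp_apply, affT_apply]
  push_cast
  split_ifs <;> grind

lemma Def2.intCast_ne (hper : ∀ i, u (i + n) = u i + n) (h : Def2 n u a b c d) (hac : a ≤ c) :
    (a : ZMod n) ≠ c := by
  intro hca
  have htc : affT n a b c = c - a + b := by rw [affT_apply, if_pos hca.symm]
  have hub : u (c - a + b) = u b + (c - a) := by
    simpa using apply_eq_add_of_intCast_eq hper (x := b) (y := c - a + b) (by push_cast [hca]; ring)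
  have := h.2.1
  simp only [comp_apply, htc, hub] at this
  linarith [h.1.2.1]

lemma Def2.definedAt_second (hper : ∀ i, u (i + n) = u i + n) (h : Def2 n u a b c d)
    (hac : (a : ZMod n) ≠ c) (hbd : (b : ZMod n) = d) (hbc : b < c) (hcd : c < d)
    (hba : b - a < n) (hlen : d - c < b - a) :
    DefinedAt u c d := by
  obtain ⟨⟨hua, hub, hab⟩, huc, -, hcd'⟩ := h
  have hcb : (c : ZMod n) ≠ b := hbd ▸ intCast_ne_of_lt_of_sub_lt hcd (by omega)
  have hdb : (d : ZMod n) ≠ a := hbd ▸ (intCast_ne_of_lt_of_sub_lt (by omega) hba).symm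
  have htc : affT n a b c = c := by rw [affT_apply, if_neg hac.symm, if_neg hcb]
  have htd : affT n a b d = d - b + a := by rw [affT_apply, if_neg hdb, if_pos hbd.symm]
  have hud : u d = u b + (d - b) := apply_eq_add_of_intCast_eq hper hbd
  have hua' : u (d - b + a) = u a + (d - b) := by
    simpa using apply_eq_add_of_intCast_eq hper (x := a) (y := d - b + a) (by push_cast [hbd]; ring)
  refine ⟨by simpa [htc] using huc, by omega, fun i hci hid => ?_⟩
  have hui : u i = u (i - (d - b)) + (d - b) := by
    have := apply_eq_add_of_intCast_eq hper (show ((i - (d - b) : ℤ) : ZMod n) = i by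
      push_cast; rw [hbd]; ring)
    linarith
  rcases hab (i - (d - b)) (by omega) (by omega) with hj | hj
  · have hia : (i : ZMod n) ≠ a := fun hia => by
      have := apply_eq_add_of_intCast_eq hper (show (a : ZMod n) = ↑(i - (d - b)) by
        push_cast; rw [hia, hbd]; ring)
      omega
    have hib : (i : ZMod n) ≠ b := hbd ▸ intCast_ne_of_lt_of_sub_lt hid (by omega)
    have := hcd' i hci hid
    simp only [comp_apply, htc, htd, hua', affT_apply n a b i, if_neg hia, if_neg hib] at this
    omega
  · omega

lemma DefinedAt.comp_affT (h : DefinedAt u a b) (hac : (a : ZMod n) ≠ c)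
    (had : (a : ZMod n) ≠ d) (hbd : (b : ZMod n) = d) (hcd : c < d) (hba : b - a < n) :
    DefinedAt (u ∘ affT n c d) a (b + c - d) := by
  obtain ⟨hua, hub, hab⟩ := h
  have hec : ((b + c - d : ℤ) : ZMod n) = c := by push_cast; rw [hbd]; ring
  have hta : affT n c d a = a := by rw [affT_apply, if_neg hac, if_neg had]
  have hte : affT n c d (b + c - d) = b := by rw [affT_apply, if_pos hec]; ring
  refine ⟨by simpa [hta] using hua, by simpa [hte] using hub, fun i hai hie => ?_⟩
  have hic : (i : ZMod n) ≠ c := hec ▸ intCast_ne_of_lt_of_sub_lt hie (by omega)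
  have hid : (i : ZMod n) ≠ d := hbd ▸ intCast_ne_of_lt_of_sub_lt (by omega : i < b) (by omega)
  simp only [comp_apply, hta, hte, affT_apply n c d i, if_neg hic, if_neg hid]
  exact hab i hai (by omega)

end

theorem stmt16_general (k : ℤ) (u : ℤ → ℤ)
    (hu : IsAffinePerm (k + 1) u)
    (a b c d : ℤ) (hab : a < b) (hbc : b < c) (hcd : c < d)
    (hba : b - a ≤ k)
    (hmod : b % (k + 1) = d % (k + 1))
    (hlen : b - a > d - c)
    (hdef : Def2 (k + 1) u a b c d) :
    Def2 (k + 1) u c d a (b + c - d) ∧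
      (u ∘ affT (k + 1) a b) ∘ affT (k + 1) c d =
        (u ∘ affT (k + 1) c d) ∘ affT (k + 1) a (b + c - d) := by
  obtain ⟨-, hper, -⟩ := hu
  obtain ⟨n, hn⟩ : ∃ n : ℕ, (n : ℤ) = k + 1 := ⟨(k + 1).toNat, by omega⟩
  rw [← hn] at hper hmod hdef ⊢
  have hbd : (b : ZMod n) = d := (ZMod.intCast_eq_intCast_iff' b d n).2 hmod
  have had : (a : ZMod n) ≠ d := hbd ▸ intCast_ne_of_lt_of_sub_lt hab (by omega)
  have hac : (a : ZMod n) ≠ c := hdef.intCast_ne hper (by omega)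
  have hcd' : (c : ZMod n) ≠ d := intCast_ne_of_lt_of_sub_lt hcd (by omega)
  refine ⟨⟨hdef.definedAt_second hper hac hbd hbc hcd (by omega) hlen,
    hdef.1.comp_affT hac had hbd hcd (by omega)⟩, ?_⟩
  rw [comp_assoc, comp_assoc, affT_comp_affT hac had hcd' hbd]

theorem stmt16 (k : ℤ) (hk : 1 ≤ k) (u : ℤ → ℤ)
    (hu : IsAffinePerm (k + 1) u) (hg : IsGrassmannian (k + 1) u)
    (a b c d : ℤ) (hab : a < b) (hbc : b < c) (hcd : c < d)
    (hba : b - a ≤ k) (hdc : d - c ≤ k)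
    (hmod : b % (k + 1) = d % (k + 1))
    (hlen : b - a > d - c)
    (hupos : 0 < u (d - b + a))
    (hdef : Def2 (k + 1) u a b c d) :
    Def2 (k + 1) u c d a (b + c - d) ∧
      (u ∘ affT (k + 1) a b) ∘ affT (k + 1) c d =
        (u ∘ affT (k + 1) c d) ∘ affT (k + 1) a (b + c - d) :=
  stmt16_general k u hu a b c d hab hbc hcd hba hmod hlen hdef
end

section
/- Let 1 ≤ r ≤ k, let x : ℤ → ℤ be a bijection with x(i) = i for all i ≤ 0 and all i > n (so x permutes {1,…,n}), let u be an affine permutation, and let s be an integer such that: (i) for all 1 ≤ i < j ≤ n, u(i−s) < u(j−s) if and only if x⁻¹(i) < x⁻¹(j); and (ii) for all 1 ≤ i ≤ n, u(i−s) ≤ 0 if and only if x⁻¹(i) ≤ r. Suppose 1 ≤ a < b ≤ n satisfy x⁻¹(a) ≤ r < x⁻¹(b) and there is no c with a < c < b and x⁻¹(a) < x⁻¹(c) < x⁻¹(b) (i.e. the permutation (a,b)·x obtained by swapping the values a and b covers x in the r-Bruhat order). Then the operator t_{a−s, b−s} is defined at u. -/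
open Function

/-! Up to the shift by `s`, the windows `u (1 - s), …, u (n - s)` and `x⁻¹ 1, …, x⁻¹ n` are in the
same relative order, so the covering condition (no `x⁻¹ c` strictly between `x⁻¹ a` and `x⁻¹ b`
for `a < c < b`) says exactly that no `u (c - s)` lies between `u (a - s)` and `u (b - s)`;
the sign condition supplies `u (a - s) ≤ 0 < u (b - s)`. -/

theorem definedAt_sub_iff (u : ℤ → ℤ) (a b s : ℤ) :
    DefinedAt u (a - s) (b - s) ↔ DefinedAt (fun i => u (i - s)) a b := by
  refine and_congr_right' (and_congr_right' ⟨fun h i hai hib => ?_, fun h i hai hib => ?_⟩)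
  · exact h (i - s) (by omega) (by omega)
  · simpa using h (i + s) (by omega) (by omega)

theorem definedAt_of_forall_notMem_Ioo {β : Type*} [LinearOrder β] {v : ℤ → ℤ} {w : ℤ → β}
    (hv : Injective v) {a b : ℤ} (ha : v a ≤ 0) (hb : 0 < v b)
    (hord : ∀ i j, a ≤ i → i < j → j ≤ b → (v i < v j ↔ w i < w j))
    (hw : ∀ c, a < c → c < b → w c ∉ Set.Ioo (w a) (w b)) :
    DefinedAt v a b := by
  refine ⟨ha, hb, fun c hac hcb => ?_⟩
  have hv_between : ¬ (v a < v c ∧ v c < v b) := by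
    rw [hord a c le_rfl hac hcb.le, hord c b hac.le hcb le_rfl]
    exact hw c hac hcb
  have hca_ne : v c ≠ v a := hv.ne (by omega)
  have hcb_ne : v c ≠ v b := hv.ne (by omega)
  omega

theorem stmt18_general (k : ℤ) (r : ℤ)
    (x : ℤ → ℤ)
    (u : ℤ → ℤ) (hu : IsAffinePerm (k + 1) u) (s : ℤ)
    (hord : ∀ i j : ℤ, 1 ≤ i → i < j → j ≤ k + 1 →
      (u (i - s) < u (j - s) ↔ Function.invFun x i < Function.invFun x j))
    (hsgn : ∀ i : ℤ, 1 ≤ i → i ≤ k + 1 →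
      (u (i - s) ≤ 0 ↔ Function.invFun x i ≤ r))
    (a b : ℤ) (ha : 1 ≤ a) (hab : a < b) (hb : b ≤ k + 1)
    (hcov1 : Function.invFun x a ≤ r) (hcov2 : r < Function.invFun x b)
    (hcov3 : ¬ ∃ c : ℤ, a < c ∧ c < b ∧
      Function.invFun x a < Function.invFun x c ∧
      Function.invFun x c < Function.invFun x b) :
    DefinedAt u (a - s) (b - s) := by
  rw [definedAt_sub_iff]
  have hu_a : u (a - s) ≤ 0 := (hsgn a ha (by omega)).2 hcov1
  have hu_b : 0 < u (b - s) := not_le.1 fun h => ((hsgn b (by omega) hb).1 h).not_gt hcov2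
  exact definedAt_of_forall_notMem_Ioo (w := invFun x) (hu.1.1.comp sub_left_injective) hu_a hu_b
    (fun i j hai hij hjb => hord i j (by omega) hij (by omega))
    (fun c hac hcb hc => hcov3 ⟨c, hac, hcb, hc⟩)

theorem stmt18 (k : ℤ) (hk : 1 ≤ k) (r : ℤ) (hr1 : 1 ≤ r) (hrk : r ≤ k)
    (x : ℤ → ℤ) (hx : Function.Bijective x)
    (hx0 : ∀ i : ℤ, i ≤ 0 → x i = i) (hxn : ∀ i : ℤ, k + 1 < i → x i = i)
    (u : ℤ → ℤ) (hu : IsAffinePerm (k + 1) u) (s : ℤ)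
    (hord : ∀ i j : ℤ, 1 ≤ i → i < j → j ≤ k + 1 →
      (u (i - s) < u (j - s) ↔ Function.invFun x i < Function.invFun x j))
    (hsgn : ∀ i : ℤ, 1 ≤ i → i ≤ k + 1 →
      (u (i - s) ≤ 0 ↔ Function.invFun x i ≤ r))
    (a b : ℤ) (ha : 1 ≤ a) (hab : a < b) (hb : b ≤ k + 1)
    (hcov1 : Function.invFun x a ≤ r) (hcov2 : r < Function.invFun x b)
    (hcov3 : ¬ ∃ c : ℤ, a < c ∧ c < b ∧
      Function.invFun x a < Function.invFun x c ∧
      Function.invFun x c < Function.invFun x b) :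
    DefinedAt u (a - s) (b - s) :=
  stmt18_general k r x u hu s hord hsgn a b ha hab hb hcov1 hcov2 hcov3
end

section
/- Let 1 ≤ r ≤ k, let x : ℤ → ℤ be a bijection with x(i) = i for all i ≤ 0 and all i > n (so x permutes {1,…,n}), let u be an affine permutation, and let s be an integer such that: (i) for all 1 ≤ i < j ≤ n, u(i−s) < u(j−s) if and only if x⁻¹(i) < x⁻¹(j); and (ii) for all 1 ≤ i ≤ n, u(i−s) ≤ 0 if and only if x⁻¹(i) ≤ r. Let (a_1,b_1), …, (a_m,b_m) be pairs of integers with 1 ≤ a_j < b_j ≤ n, set x_0 = x and x_j = (a_j, b_j)·x_{j−1} (swapping the values a_j and b_j), and suppose every step is a cover in the r-Bruhat order, i.e. for each j: x_{j−1}⁻¹(a_j) ≤ r < x_{j−1}⁻¹(b_j) and ℓ(x_j) = ℓ(x_{j−1}) + 1, where ℓ(y) denotes the number of inversions of y, i.e. pairs 1 ≤ i < i' ≤ n with y(i) > y(i'). Then, setting u_0 = u and u_j = u_{j−1} ∘ t_{a_j − s, b_j − s}, the operator t_{a_j − s, b_j − s} is defined at u_{j−1} for every 1 ≤ j ≤ m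 (so the image chain is a nonzero path in the affine 0-Bruhat graph starting at u). -/
open Function

/-- The number of inversions of a permutation of `{1, …, n}`: the number of pairs
`1 ≤ i < i' ≤ n` with `y i > y i'`. -/
noncomputable def finLen (n : ℤ) (y : ℤ → ℤ) : ℕ :=
  Set.ncard {p : ℤ × ℤ | 1 ≤ p.1 ∧ p.1 < p.2 ∧ p.2 ≤ n ∧ y p.2 < y p.1}

/-!
Along the chain the window values do not move: since `t_{a-s,b-s}` acts on the shifted window
`[1-s, n-s]` as the transposition `(a b)` does on `[1, n]`, one has `u_j (x_j p - s) = u (x p - s)`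
for all `1 ≤ p ≤ n`, and by the hypotheses on `u` this is an increasing function of `p` that is
`≤ 0` exactly when `p ≤ r`. Definedness of `t_{a-s,b-s}` at `u_j` thus reduces to: no position
strictly between `p = x_j⁻¹ a` and `q = x_j⁻¹ b` carries a value strictly between `a` and `b`.
This is the classical cover criterion: such a position `m` would make the swap create the three
inversions `(p, q)`, `(p, m)`, `(m, q)` on top of (an injective image of) the old ones.
-/

open Equiv Set

lemma Int.emod_eq_zero_iff_of_abs_lt {n d : ℤ} (h : |d| < n) : d % n = 0 ↔ d = 0 :=
  ⟨fun hd => Int.eq_zero_of_abs_lt_dvd (Int.dvd_of_emod_eq_zero hd) h,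
    fun hd => hd ▸ Int.zero_emod n⟩

lemma affT_sub_sub_apply_sub {n a b s i : ℤ} (ha : a ∈ Icc 1 n) (hb : b ∈ Icc 1 n)
    (hi : i ∈ Icc 1 n) : affT n (a - s) (b - s) (i - s) = swap a b i - s := by
  have hmod : ∀ c ∈ Icc 1 n, (i - c) % n = 0 ↔ i = c := fun c hc => by
    rw [Int.emod_eq_zero_iff_of_abs_lt (abs_lt.2 ⟨by grind, by grind⟩), sub_eq_zero]
  simp only [affT, sub_sub_sub_cancel_right, hmod a ha, hmod b hb, swap_apply_def]
  split_ifs <;> omega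

structure IsWindowPerm (n : ℤ) (y : ℤ → ℤ) : Prop where
  bijective : Bijective y
  apply_of_nonpos : ∀ i ≤ 0, y i = i
  apply_of_gt : ∀ i, n < i → y i = i

namespace IsWindowPerm

variable {n : ℤ} {y : ℤ → ℤ}

lemma apply_of_notMem (hy : IsWindowPerm n y) {i : ℤ} (hi : i ∉ Icc 1 n) : y i = i := by
  rcases (by grind : i ≤ 0 ∨ n < i) with h | h
  exacts [hy.apply_of_nonpos i h, hy.apply_of_gt i h]

lemma mem_of_apply_mem (hy : IsWindowPerm n y) {i : ℤ} (hi : y i ∈ Icc 1 n) :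
    i ∈ Icc 1 n := by
  by_contra h
  exact h (hy.apply_of_notMem h ▸ hi)

lemma apply_mem (hy : IsWindowPerm n y) {i : ℤ} (hi : i ∈ Icc 1 n) : y i ∈ Icc 1 n := by
  by_contra h
  rw [hy.bijective.injective (hy.apply_of_notMem h)] at h
  exact h hi

lemma swap_comp (hy : IsWindowPerm n y) {a b : ℤ} (ha : a ∈ Icc 1 n) (hb : b ∈ Icc 1 n) :
    IsWindowPerm n (swap a b ∘ y) where
  bijective := (swap a b).bijective.comp hy.bijective
  apply_of_nonpos i hi := by
    rw [comp_apply, hy.apply_of_nonpos i hi, swap_apply_of_ne_of_ne (by grind) (by grind)]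
  apply_of_gt i hi := by
    rw [comp_apply, hy.apply_of_gt i hi, swap_apply_of_ne_of_ne (by grind) (by grind)]

lemma comp_affT_apply_swap_comp (hy : IsWindowPerm n y) {a b s p : ℤ} (v : ℤ → ℤ)
    (ha : a ∈ Icc 1 n) (hb : b ∈ Icc 1 n) (hp : p ∈ Icc 1 n) :
    (v ∘ affT n (a - s) (b - s)) ((swap a b ∘ y) p - s) = v (y p - s) := by
  rw [comp_apply, affT_sub_sub_apply_sub ha hb ((hy.swap_comp ha hb).apply_mem hp), comp_apply,
    swap_apply_self]

end IsWindowPerm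

def invSet (n : ℤ) (y : ℤ → ℤ) : Set (ℤ × ℤ) :=
  {P | 1 ≤ P.1 ∧ P.1 < P.2 ∧ P.2 ≤ n ∧ y P.2 < y P.1}

lemma finLen_eq_ncard_invSet (n : ℤ) (y : ℤ → ℤ) : finLen n y = (invSet n y).ncard := rfl

lemma invSet_finite (n : ℤ) (y : ℤ → ℤ) : (invSet n y).Finite :=
  (finite_Icc ((1 : ℤ), (1 : ℤ)) (n, n)).subset fun P ⟨h1, h2, h3, _⟩ => by
    simp only [mem_Icc, Prod.le_def]; omega

/-- For `p < q` with `y p < y q`, an injection of the inversions of `y` into those of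
`y ∘ swap p q` whose image misses `(p, q)` and every `(p, m)`, `(m, q)` with `p < m < q` and
`y p < y m < y q`. -/
def rerouteInv (y : ℤ → ℤ) (p q : ℤ) (P : ℤ × ℤ) : ℤ × ℤ :=
  if P.2 = p ∧ y P.1 < y q then (P.1, q)
  else if P.1 = q ∧ y p < y P.2 then (p, P.2)
  else P

section Inversions

variable {n p q : ℤ} {y : ℤ → ℤ}

lemma rerouteInv_mapsTo (hy : Injective y) (hp : 1 ≤ p) (hq : q ≤ n) (hpq : p < q)
    (hypq : y p < y q) : MapsTo (rerouteInv y p q) (invSet n y) (invSet n (y ∘ swap p q)) := by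
  rintro ⟨i, j⟩ ⟨h1, h2, h3, h4⟩
  simp only [rerouteInv, invSet, comp_apply, swap_apply_def]
  split_ifs <;> simp only [mem_ofPred_eq] <;> grind [hy.eq_iff]

lemma rerouteInv_injOn (hy : Injective y) :
    InjOn (rerouteInv y p q) (invSet n y) := by
  rintro ⟨i, j⟩ ⟨h1, h2, h3, h4⟩ ⟨i', j'⟩ ⟨h1', h2', h3', h4'⟩
  simp only [rerouteInv]
  grind [hy.eq_iff]

lemma rerouteInv_notMem {m : ℤ} (hy : Injective y) (hpm : p < m) (hmq : m < q)
    (hpm' : y p < y m) (hmq' : y m < y q) {P : ℤ × ℤ} (hP : P ∈ invSet n y) :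
    rerouteInv y p q P ∉ ({(p, q), (p, m), (m, q)} : Set (ℤ × ℤ)) := by
  obtain ⟨i, j⟩ := P
  obtain ⟨h1, h2, h3, h4⟩ := hP
  simp only [rerouteInv, mem_insert_iff, mem_singleton_iff]
  grind [hy.eq_iff]

lemma finLen_add_three_le {m : ℤ} (hy : Injective y) (hp : 1 ≤ p) (hpm : p < m) (hmq : m < q)
    (hq : q ≤ n) (hpm' : y p < y m) (hmq' : y m < y q) :
    finLen n y + 3 ≤ finLen n (y ∘ swap p q) := by
  set E : Set (ℤ × ℤ) := {(p, q), (p, m), (m, q)}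
  have hE : E.ncard = 3 := ncard_eq_three.2 ⟨_, _, _, by grind, by grind, by grind, rfl⟩
  have hEinv : E ⊆ invSet n (y ∘ swap p q) := by
    simp only [E, insert_subset_iff, singleton_subset_iff, invSet, mem_ofPred_eq, comp_apply,
      swap_apply_left, swap_apply_right, swap_apply_of_ne_of_ne hpm.ne' hmq.ne]
    omega
  have hdisj : Disjoint (rerouteInv y p q '' invSet n y) E := by
    rw [disjoint_left]
    rintro _ ⟨P, hP, rfl⟩
    exact rerouteInv_notMem hy hpm hmq hpm' hmq' hP
  rw [finLen_eq_ncard_invSet, finLen_eq_ncard_invSet, ← hE,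
    ← (rerouteInv_injOn hy).ncard_image,
    ← ncard_union_eq hdisj ((invSet_finite n y).image _) (toFinite E)]
  exact ncard_le_ncard (union_subset (rerouteInv_mapsTo hy hp hq (hpm.trans hmq)
    (hpm'.trans hmq')).image_subset hEinv) (invSet_finite n _)

lemma apply_notMem_Ioo_of_finLen_swap_comp_eq_succ {t : ℤ} (hy : Injective y) (hp : 1 ≤ p)
    (hq : q ≤ n) (hlen : finLen n (swap (y p) (y q) ∘ y) = finLen n y + 1) (hpt : p < t)
    (htq : t < q) : y t ∉ Ioo (y p) (y q) := by
  rintro ⟨hpt', htq'⟩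
  have hswap : swap (y p) (y q) ∘ y = y ∘ swap p q := funext fun i => (hy.map_swap p q i).symm
  have := finLen_add_three_le hy hp hpt htq hq hpt' htq'
  rw [hswap] at hlen
  omega

end Inversions

section Chain

variable {n s : ℤ} {x y u v w : ℤ → ℤ}

lemma IsWindowPerm.strictMonoOn_of_lt_iff (hx : IsWindowPerm n x) (hu : Injective u)
    (hord : ∀ i j : ℤ, 1 ≤ i → i < j → j ≤ n →
      (u (i - s) < u (j - s) ↔ invFun x i < invFun x j)) :
    StrictMonoOn (fun p => u (x p - s)) (Icc 1 n) := by
  intro p hp q hq hpq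
  have hinv := leftInverse_invFun hx.bijective.injective
  obtain ⟨hxp1, hxpn⟩ := hx.apply_mem hp
  obtain ⟨hxq1, hxqn⟩ := hx.apply_mem hq
  rcases lt_trichotomy (x p) (x q) with h | h | h
  · exact (hord _ _ hxp1 h hxqn).2 (by rwa [hinv p, hinv q])
  · exact absurd (hx.bijective.injective h) hpq.ne
  · have hnot := mt (hord _ _ hxq1 h hxpn).1 (by rw [hinv p, hinv q]; exact hpq.not_gt)
    refine lt_of_le_of_ne (not_lt.1 hnot) fun he => ?_
    exact h.ne' (by simpa using hu he)

theorem IsWindowPerm.definedAt {r a b : ℤ} (hy : IsWindowPerm n y)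
    (hw : StrictMonoOn w (Icc 1 n)) (hwr : ∀ p ∈ Icc 1 n, w p ≤ 0 ↔ p ≤ r)
    (hvw : ∀ p ∈ Icc 1 n, v (y p - s) = w p) (ha : a ∈ Icc 1 n) (hb : b ∈ Icc 1 n)
    (hpa : invFun y a ≤ r) (hqb : r < invFun y b)
    (hlen : finLen n (swap a b ∘ y) = finLen n y + 1) :
    DefinedAt v (a - s) (b - s) := by
  have hyinv : ∀ i, y (invFun y i) = i := fun i => invFun_eq (hy.bijective.surjective i)
  have hmem : ∀ i ∈ Icc 1 n, invFun y i ∈ Icc 1 n :=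
    fun i hi => hy.mem_of_apply_mem ((hyinv i).symm ▸ hi)
  have hvi : ∀ i ∈ Icc 1 n, v (i - s) = w (invFun y i) := fun i hi => by
    rw [← hvw _ (hmem i hi), hyinv]
  set p := invFun y a
  set q := invFun y b
  have hp := hmem a ha
  have hq := hmem b hb
  refine ⟨hvi a ha ▸ (hwr p hp).2 hpa, hvi b hb ▸ lt_of_not_ge fun h => ?_,
    fun c hac hcb => ?_⟩
  · exact hqb.not_ge ((hwr q hq).1 h)
  obtain ⟨t, ht, rfl⟩ : ∃ t ∈ Icc 1 n, y t - s = c :=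
    ⟨invFun y (c + s), hmem _ ⟨by grind, by grind⟩, by rw [hyinv]; ring⟩
  have hbetween := apply_notMem_Ioo_of_finLen_swap_comp_eq_succ (t := t) hy.bijective.injective
    hp.1 hq.2 (by rwa [hyinv, hyinv])
  rw [hyinv, hyinv] at hbetween
  rw [hvi a ha, hvi b hb, hvw t ht]
  rcases lt_trichotomy t p with htp | rfl | hpt
  · exact .inl (hw ht hp htp)
  · rw [hyinv] at hac; omega
  rcases lt_trichotomy t q with htq | rfl | hqt
  · exact absurd ⟨by omega, by omega⟩ (hbetween hpt htq)
  · rw [hyinv] at hcb; omega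
  · exact .inr (hw hq ht hqt)

end Chain

theorem stmt19_general (k : ℤ) (r : ℤ)
    (x : ℤ → ℤ) (hx : Function.Bijective x)
    (hx0 : ∀ i : ℤ, i ≤ 0 → x i = i) (hxn : ∀ i : ℤ, k + 1 < i → x i = i)
    (u : ℤ → ℤ) (hu : IsAffinePerm (k + 1) u) (s : ℤ)
    (hord : ∀ i j : ℤ, 1 ≤ i → i < j → j ≤ k + 1 →
      (u (i - s) < u (j - s) ↔ Function.invFun x i < Function.invFun x j))
    (hsgn : ∀ i : ℤ, 1 ≤ i → i ≤ k + 1 →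
      (u (i - s) ≤ 0 ↔ Function.invFun x i ≤ r))
    (m : ℕ) (A B : ℕ → ℤ)
    (hAB : ∀ j < m, 1 ≤ A j ∧ A j < B j ∧ B j ≤ k + 1)
    (xs : ℕ → ℤ → ℤ) (hxs0 : xs 0 = x)
    (hxsrec : ∀ j < m, xs (j + 1) = (Equiv.swap (A j) (B j) : ℤ → ℤ) ∘ xs j)
    (hcov : ∀ j < m,
      Function.invFun (xs j) (A j) ≤ r ∧ r < Function.invFun (xs j) (B j) ∧
        finLen (k + 1) (xs (j + 1)) = finLen (k + 1) (xs j) + 1)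
    (us : ℕ → ℤ → ℤ) (hus0 : us 0 = u)
    (husrec : ∀ j < m, us (j + 1) = us j ∘ affT (k + 1) (A j - s) (B j - s)) :
    ∀ j < m, DefinedAt (us j) (A j - s) (B j - s) := by
  have hxw : IsWindowPerm (k + 1) x := ⟨hx, hx0, hxn⟩
  have hw := hxw.strictMonoOn_of_lt_iff hu.1.1 hord
  have hwr : ∀ p ∈ Icc 1 (k + 1), u (x p - s) ≤ 0 ↔ p ≤ r := fun p hp => by
    have hxp := hxw.apply_mem hp
    rw [hsgn _ hxp.1 hxp.2, leftInverse_invFun hx.injective p]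
  have hABmem : ∀ j < m, A j ∈ Icc 1 (k + 1) ∧ B j ∈ Icc 1 (k + 1) := fun j hj => by
    obtain ⟨h1, h2, h3⟩ := hAB j hj
    exact ⟨⟨h1, by omega⟩, ⟨by omega, h3⟩⟩
  have hchain : ∀ j ≤ m, IsWindowPerm (k + 1) (xs j) ∧
      ∀ p ∈ Icc 1 (k + 1), us j (xs j p - s) = u (x p - s) := by
    intro j
    induction j with
    | zero =>
      intro _
      rw [hxs0, hus0]
      exact ⟨hxw, fun _ _ => rfl⟩
    | succ j ih =>
      intro hj
      obtain ⟨hy, hvw⟩ := ih (by omega)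
      obtain ⟨ha, hb⟩ := hABmem j hj
      rw [hxsrec j hj, husrec j hj]
      exact ⟨hy.swap_comp ha hb, fun p hp =>
        (hy.comp_affT_apply_swap_comp _ ha hb hp).trans (hvw p hp)⟩
  intro j hj
  obtain ⟨hy, hvw⟩ := hchain j hj.le
  obtain ⟨ha, hb⟩ := hABmem j hj
  obtain ⟨hpa, hqb, hlen⟩ := hcov j hj
  rw [hxsrec j hj] at hlen
  exact hy.definedAt hw hwr hvw ha hb hpa hqb hlen

theorem stmt19 (k : ℤ) (hk : 1 ≤ k) (r : ℤ) (hr1 : 1 ≤ r) (hrk : r ≤ k)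
    (x : ℤ → ℤ) (hx : Function.Bijective x)
    (hx0 : ∀ i : ℤ, i ≤ 0 → x i = i) (hxn : ∀ i : ℤ, k + 1 < i → x i = i)
    (u : ℤ → ℤ) (hu : IsAffinePerm (k + 1) u) (s : ℤ)
    (hord : ∀ i j : ℤ, 1 ≤ i → i < j → j ≤ k + 1 →
      (u (i - s) < u (j - s) ↔ Function.invFun x i < Function.invFun x j))
    (hsgn : ∀ i : ℤ, 1 ≤ i → i ≤ k + 1 →
      (u (i - s) ≤ 0 ↔ Function.invFun x i ≤ r))
    (m : ℕ) (A B : ℕ → ℤ)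
    (hAB : ∀ j < m, 1 ≤ A j ∧ A j < B j ∧ B j ≤ k + 1)
    (xs : ℕ → ℤ → ℤ) (hxs0 : xs 0 = x)
    (hxsrec : ∀ j < m, xs (j + 1) = (Equiv.swap (A j) (B j) : ℤ → ℤ) ∘ xs j)
    (hcov : ∀ j < m,
      Function.invFun (xs j) (A j) ≤ r ∧ r < Function.invFun (xs j) (B j) ∧
        finLen (k + 1) (xs (j + 1)) = finLen (k + 1) (xs j) + 1)
    (us : ℕ → ℤ → ℤ) (hus0 : us 0 = u)
    (husrec : ∀ j < m, us (j + 1) = us j ∘ affT (k + 1) (A j - s) (B j - s)) :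
    ∀ j < m, DefinedAt (us j) (A j - s) (B j - s) :=
  stmt19_general k r x hx hx0 hxn u hu s hord hsgn m A B hAB xs hxs0 hxsrec hcov us hus0 husrec
end
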